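/- arXiv:1510.08413 — 13 statements merged into one kernel-verified Lean document; each statement's English description precedes it below -/
import Mathlib

section
/- Let n ≥ 2 and let V₀ and V₁ be two consecutive vertical lines of (Z/nZ)², i.e. V₀ = {a} × Z/nZ and V₁ = {a+1} × Z/nZ for some a ∈ Z/nZ. If X, Y ⊆ (Z/nZ)² satisfy |X| ≤ n-1, |Y| ≤ n-1, and V₀ ∪ V₁ ⊆ D(X) ∪ H(Y), then |X| + |Y| ≥ n + 1. -/
def diag (n : ℕ) (p : ZMod n × ZMod n) : Set (ZMod n × ZMod n) :=
  {q | ∃ t : ZMod n, q = (p.1 + t, p.2 + t)}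

def horiz (n : ℕ) (p : ZMod n × ZMod n) : Set (ZMod n × ZMod n) :=
  {q | ∃ t : ZMod n, q = (t, p.2)}

def vert (n : ℕ) (p : ZMod n × ZMod n) : Set (ZMod n × ZMod n) :=
  {q | ∃ t : ZMod n, q = (p.1, t)}

def quower (n : ℕ) (p : ZMod n × ZMod n) : Set (ZMod n × ZMod n) :=
  diag n p ∪ horiz n p ∪ vert n p

-- a nonempty subset of ZMod n closed under subtracting 1 is everything
lemma shift_closed_univ (n : ℕ) [NeZero n] (T : Set (ZMod n)) (hne : T.Nonempty)
    (hsh : ∀ b ∈ T, b - 1 ∈ T) : T = Set.univ := by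
  obtain ⟨b, hb⟩ := hne
  have key : ∀ m : ℕ, b - (m : ZMod n) ∈ T := by
    intro m
    induction m with
    | zero => simpa using hb
    | succ k ih =>
        have := hsh _ ih
        have h : b - ((k : ZMod n) + 1) = b - (k : ZMod n) - 1 := by ring
        rw [Nat.cast_succ, h]
        exact this
  ext c
  simp only [Set.mem_univ, iff_true]
  have := key (b - c).val
  rwa [ZMod.natCast_val, ZMod.cast_id, sub_sub_cancel] at this

theorem stmt_2 (n : ℕ) (hn : 2 ≤ n) (a : ZMod n)
    (X Y : Set (ZMod n × ZMod n))
    (hX : X.ncard ≤ n - 1) (hY : Y.ncard ≤ n - 1)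
    (hcover : ({a} ×ˢ (Set.univ : Set (ZMod n))) ∪ ({a + 1} ×ˢ Set.univ) ⊆
      (⋃ x ∈ X, diag n x) ∪ ⋃ y ∈ Y, horiz n y) :
    n + 1 ≤ X.ncard + Y.ncard := by
  haveI : NeZero n := ⟨by omega⟩
  set D : Set (ZMod n) := (fun p : ZMod n × ZMod n => p.2 - p.1) '' X with hDdef
  set R : Set (ZMod n) := Prod.snd '' Y with hRdef
  have hDcard : D.ncard ≤ X.ncard := Set.ncard_image_le (Set.toFinite X)
  have hRcard : R.ncard ≤ Y.ncard := Set.ncard_image_le (Set.toFinite Y)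
  have hcardZ : Nat.card (ZMod n) = n := Nat.card_zmod n
  -- covering facts
  have hcov1 : ∀ b : ZMod n, b ∉ R → b - a ∈ D := by
    intro b hbR
    have hmem : (a, b) ∈ ({a} ×ˢ (Set.univ : Set (ZMod n))) ∪ ({a + 1} ×ˢ Set.univ) := by
      left; simp
    rcases hcover hmem with h | h
    · simp only [Set.mem_iUnion] at h
      obtain ⟨x, hx, t, ht⟩ := h
      refine ⟨x, hx, ?_⟩
      have h1 : a = x.1 + t := congrArg Prod.fst ht
      have h2 : b = x.2 + t := congrArg Prod.snd ht
      rw [h1, h2]; ring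
    · simp only [Set.mem_iUnion] at h
      obtain ⟨y, hy, t, ht⟩ := h
      exact absurd ⟨y, hy, (congrArg Prod.snd ht).symm⟩ hbR
  have hcov2 : ∀ b : ZMod n, b ∉ R → b - a - 1 ∈ D := by
    intro b hbR
    have hmem : (a + 1, b) ∈ ({a} ×ˢ (Set.univ : Set (ZMod n))) ∪ ({a + 1} ×ˢ Set.univ) := by
      right; simp
    rcases hcover hmem with h | h
    · simp only [Set.mem_iUnion] at h
      obtain ⟨x, hx, t, ht⟩ := h
      refine ⟨x, hx, ?_⟩
      have h1 : a + 1 = x.1 + t := congrArg Prod.fst ht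
      have h2 : b = x.2 + t := congrArg Prod.snd ht
      show x.2 - x.1 = b - a - 1
      linear_combination h1 - h2
    · simp only [Set.mem_iUnion] at h
      obtain ⟨y, hy, t, ht⟩ := h
      exact absurd ⟨y, hy, (congrArg Prod.snd ht).symm⟩ hbR
  set T : Set (ZMod n) := (fun b => b - a) '' Rᶜ with hTdef
  have hTD : T ⊆ D := by
    rintro c ⟨b, hb, rfl⟩; exact hcov1 b hb
  have hTD' : ∀ c ∈ T, c - 1 ∈ D := by
    rintro c ⟨b, hb, rfl⟩; exact hcov2 b hb
  have hTcard : T.ncard = Rᶜ.ncard :=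
    Set.ncard_image_of_injective _ (sub_left_injective)
  have hcompl : R.ncard + Rᶜ.ncard = n := by
    have h := Set.ncard_add_ncard_compl R
    rwa [hcardZ] at h
  have hRn : R.ncard ≤ n - 1 := le_trans hRcard hY
  have hTne : T.Nonempty := by
    rw [← Set.ncard_pos (Set.toFinite T), hTcard]; omega
  by_cases hcl : ∀ c ∈ T, c - 1 ∈ T
  · have : T = Set.univ := shift_closed_univ n T hTne hcl
    have hDuniv : D = Set.univ := Set.eq_univ_of_univ_subset (this ▸ hTD)
    have : D.ncard = n := by rw [hDuniv, Set.ncard_univ, hcardZ]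
    omega
  · push_neg at hcl
    obtain ⟨c, hcT, hcnT⟩ := hcl
    have hins : insert (c - 1) T ⊆ D := by
      intro z hz
      rcases hz with rfl | hz
      · exact hTD' c hcT
      · exact hTD hz
    have : T.ncard + 1 ≤ D.ncard := by
      have := Set.ncard_le_ncard hins (Set.toFinite D)
      rwa [Set.ncard_insert_of_notMem hcnT (Set.toFinite T)] at this
    omega
end

section
/- If n is a positive integer with n ≡ 2 (mod 4), then the set X = {(2, n), (4, n-2), ..., (n, 2)} = {(2k, n+2-2k) : 1 ≤ k ≤ n/2} of n/2 elements of (Z/nZ)² satisfies QW(X) = (Z/nZ)², i.e. the quowers centered at X cover the whole n×n toroidal board. -/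
lemma aux_castA (n : ℕ) (hn2 : n % 2 = 0) (hpos : 0 < n) (a : ZMod n) (ha : 2 ∣ a.val) :
    ∃ k : ℕ, 1 ≤ k ∧ k ≤ n / 2 ∧ ((2 * k : ℕ) : ZMod n) = a := by
  haveI : NeZero n := ⟨hpos.ne'⟩
  rcases eq_or_ne a.val 0 with h0 | h0
  · refine ⟨n / 2, by omega, le_refl _, ?_⟩
    have h2 : 2 * (n / 2) = n := by omega
    have ha0 : a = 0 := by rwa [← ZMod.val_eq_zero]
    rw [h2, ha0, ZMod.natCast_self]
  · obtain ⟨f, hf⟩ := ha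
    have hlt := ZMod.val_lt a
    refine ⟨f, by omega, by omega, ?_⟩
    rw [← hf]
    simp [ZMod.natCast_val, ZMod.cast_id]

lemma aux_castB (n : ℕ) (hmod : n % 4 = 2) (a : ZMod n) (ha : 2 ∣ a.val) :
    ∃ k : ℕ, 1 ≤ k ∧ k ≤ n / 2 ∧ ((4 * k : ℕ) : ZMod n) = a := by
  haveI : NeZero n := ⟨by omega⟩
  obtain ⟨f, hf⟩ := ha
  set m := n / 2 with hm
  have hmpos : 0 < m := by omega
  have hmodd : m % 2 = 1 := by omega
  set i := (m + 1) / 2 with hi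
  have h2i : 2 * i = m + 1 := by omega
  set k0 := (f * i) % m with hk0
  set k : ℕ := if k0 = 0 then m else k0 with hk
  have hk0lt : k0 < m := Nat.mod_lt _ hmpos
  have hk1 : 1 ≤ k := by rw [hk]; split <;> omega
  have hk2 : k ≤ m := by rw [hk]; split <;> omega
  refine ⟨k, hk1, hk2, ?_⟩
  have hkk0 : k ≡ k0 [MOD m] := by
    rw [hk]; split
    · rename_i h; rw [h]; exact (Nat.modEq_zero_iff_dvd).2 dvd_rfl
    · rfl
  have h1 : 2 * k ≡ f [MOD m] := by
    calc 2 * k ≡ 2 * k0 [MOD m] := hkk0.mul_left 2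
      _ ≡ 2 * (f * i) [MOD m] := ((Nat.mod_modEq (f * i) m).mul_left 2)
      _ = f * (2 * i) := by ring
      _ = f * (m + 1) := by rw [h2i]
      _ ≡ f * 1 [MOD m] := Nat.ModEq.mul_left f (Nat.add_mod_left m 1)
      _ = f := by ring
  have h2 : 4 * k ≡ a.val [MOD n] := by
    have h3 : 2 * (2 * k) ≡ 2 * f [MOD 2 * m] := Nat.ModEq.mul_left' 2 h1
    have hn2m : 2 * m = n := by omega
    have h4k : 2 * (2 * k) = 4 * k := by ring
    rw [hn2m, h4k, ← hf] at h3
    exact h3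
  calc ((4 * k : ℕ) : ZMod n) = ((a.val : ℕ) : ZMod n) := (ZMod.natCast_eq_natCast_iff _ _ _).mpr h2
    _ = a := by simp [ZMod.natCast_val, ZMod.cast_id]

lemma aux_par (n : ℕ) [NeZero n] (hn2 : (2 : ℕ) ∣ n) (a : ZMod n) :
    (ZMod.castHom hn2 (ZMod 2)) a = 0 ↔ 2 ∣ a.val := by
  have h : (ZMod.castHom hn2 (ZMod 2)) a = ((a.val : ℕ) : ZMod 2) := by
    simp [ZMod.castHom_apply, ZMod.natCast_val]
  rw [h, ZMod.natCast_eq_zero_iff]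

theorem stmt_3 (n : ℕ) (hn : 0 < n) (hmod : n % 4 = 2) :
    let X : Set (ZMod n × ZMod n) :=
      {p | ∃ k : ℕ, 1 ≤ k ∧ k ≤ n / 2 ∧ p = (((2 * k : ℕ) : ZMod n), ((n + 2 - 2 * k : ℕ) : ZMod n))}
    X.ncard = n / 2 ∧ (⋃ x ∈ X, quower n x) = Set.univ := by
  intro X
  haveI : NeZero n := ⟨hn.ne'⟩
  have hdvd : (2 : ℕ) ∣ n := by omega
  have hX : X = {p | ∃ k : ℕ, 1 ≤ k ∧ k ≤ n / 2 ∧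
      p = (((2 * k : ℕ) : ZMod n), ((n + 2 - 2 * k : ℕ) : ZMod n))} := rfl
  have hcast : ∀ k : ℕ, k ≤ n / 2 →
      ((n + 2 - 2 * k : ℕ) : ZMod n) = 2 - ((2 * k : ℕ) : ZMod n) := by
    intro k hk
    have h2k : 2 * k ≤ n + 2 := by omega
    rw [Nat.cast_sub h2k]
    push_cast
    simp [ZMod.natCast_self]
  constructor
  · -- cardinality
    have hXeq : X = (fun k : ℕ =>
        (((2 * k : ℕ) : ZMod n), ((n + 2 - 2 * k : ℕ) : ZMod n))) '' Set.Icc 1 (n / 2) := by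
      rw [hX]
      ext p
      constructor
      · rintro ⟨k, h1, h2, rfl⟩; exact ⟨k, ⟨h1, h2⟩, rfl⟩
      · rintro ⟨k, ⟨h1, h2⟩, rfl⟩; exact ⟨k, h1, h2, rfl⟩
    rw [hXeq]
    have hinj : Set.InjOn (fun k : ℕ =>
        (((2 * k : ℕ) : ZMod n), ((n + 2 - 2 * k : ℕ) : ZMod n))) (Set.Icc 1 (n / 2)) := by
      rintro k1 ⟨hk11, hk12⟩ k2 ⟨hk21, hk22⟩ heq
      have h1 : ((2 * k1 : ℕ) : ZMod n) = ((2 * k2 : ℕ) : ZMod n) :=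
        congrArg Prod.fst heq
      have h2 : 2 * k1 % n = 2 * k2 % n := (ZMod.natCast_eq_natCast_iff _ _ _).mp h1
      have hb1 : 2 * k1 ≤ n := by omega
      have hb2 : 2 * k2 ≤ n := by omega
      rcases eq_or_lt_of_le hb1 with e1 | l1 <;> rcases eq_or_lt_of_le hb2 with e2 | l2
      · omega
      · rw [e1, Nat.mod_self, Nat.mod_eq_of_lt l2] at h2; omega
      · rw [e2, Nat.mod_self, Nat.mod_eq_of_lt l1] at h2; omega
      · rw [Nat.mod_eq_of_lt l1, Nat.mod_eq_of_lt l2] at h2; omega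
    rw [Set.ncard_image_of_injOn hinj, Set.ncard_eq_toFinset_card', Set.toFinset_Icc,
      Nat.card_Icc]
    omega
  · -- coverage
    rw [Set.eq_univ_iff_forall]
    rintro ⟨x, y⟩
    set φ := ZMod.castHom hdvd (ZMod 2) with hφ
    have h01 : ∀ a : ZMod 2, a = 0 ∨ a = 1 := by decide
    have hphi2 : φ (2 : ZMod n) = 0 := by
      have h := map_ofNat φ 2
      rw [h]; decide
    rcases h01 (φ y) with hy | hy
    · -- y even : horizontal
      obtain ⟨k, hk1, hk2, hkc⟩ := aux_castA n (by omega) hn (2 - y) (by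
        rw [← aux_par n hdvd]; rw [map_sub, hphi2, hy]; ring)
      refine Set.mem_biUnion (show _ ∈ X from ⟨k, hk1, hk2, rfl⟩) ?_
      refine Or.inl (Or.inr ⟨x, ?_⟩)
      simp only [Prod.mk.injEq, true_and]
      rw [hcast k hk2, hkc]
      ring
    · rcases h01 (φ x) with hx | hx
      · -- x even : vertical
        obtain ⟨k, hk1, hk2, hkc⟩ := aux_castA n (by omega) hn x (by
          rw [← aux_par n hdvd]; exact hx)
        refine Set.mem_biUnion (show _ ∈ X from ⟨k, hk1, hk2, rfl⟩) ?_
        refine Or.inr ⟨y, ?_⟩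
        simp only [Prod.mk.injEq, and_true]
        rw [hkc]
      · -- both odd : diagonal
        obtain ⟨k, hk1, hk2, hkc⟩ := aux_castB n hmod (x - y + 2) (by
          rw [← aux_par n hdvd]; rw [map_add, map_sub, hphi2, hx, hy]; ring)
        refine Set.mem_biUnion (show _ ∈ X from ⟨k, hk1, hk2, rfl⟩) ?_
        refine Or.inl (Or.inl ⟨x - ((2 * k : ℕ) : ZMod n), ?_⟩)
        have h4 : ((4 * k : ℕ) : ZMod n) = 2 * ((2 * k : ℕ) : ZMod n) := by
          push_cast; ring
        have hkc2 : x - y + 2 = 2 * ((2 * k : ℕ) : ZMod n) := by rw [← h4, hkc]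
        simp only [Prod.mk.injEq]
        constructor
        · ring
        · rw [hcast k hk2]
          linear_combination -hkc2
end

section
/- For any finite group G, if X ⊆ G² is such that the quowers QW(x), x ∈ X, cover G² \ D(1,1), then |X| ≥ (|G| - 1)/2; and if they cover all of G², then |X| ≥ |G|/2. -/
def gdiag (G : Type*) [Group G] (p : G × G) : Set (G × G) :=
  {q | ∃ t : G, q = (t * p.1, t * p.2)}

def ghoriz (G : Type*) [Group G] (p : G × G) : Set (G × G) :=
  {q | ∃ t : G, q = (t, p.2)}

def gvert (G : Type*) [Group G] (p : G × G) : Set (G × G) :=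
  {q | ∃ t : G, q = (p.1, t)}

def gquower (G : Type*) [Group G] (p : G × G) : Set (G × G) :=
  gdiag G p ∪ ghoriz G p ∪ gvert G p

/-- The "fiber" of diagonal class `g`. -/
private def gfiber (G : Type*) [Group G] (g : G) : Set (G × G) :=
  {p | p.2 = p.1 * g}

private lemma gfiber_ncard (G : Type*) [Group G] [Fintype G] (g : G) :
    (gfiber G g).ncard = Fintype.card G := by
  have : gfiber G g = Set.range (fun t : G => (t, t * g)) := by
    ext p
    constructor
    · intro hp
      exact ⟨p.1, by simp [Prod.ext_iff, hp.symm]⟩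
    · rintro ⟨t, rfl⟩
      rfl
  rw [this, ← Nat.card_coe_set_eq,
    Nat.card_range_of_injective (f := fun t : G => (t, t * g))
      (fun a b h => by simpa [Prod.ext_iff] using h), Nat.card_eq_fintype_card]

/-- If no element of `X` has diagonal class `g` but the quowers of `X` cover
the fiber of `g`, then `|G| ≤ 2 |X|`. -/
private lemma two_card_bound (G : Type*) [Group G] [Fintype G] (X : Set (G × G)) (g : G)
    (hg : ∀ x ∈ X, x.1⁻¹ * x.2 ≠ g)
    (hcov : gfiber G g ⊆ ⋃ x ∈ X, gquower G x) :
    Fintype.card G ≤ 2 * X.ncard := by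
  classical
  have hex : ∀ p : G × G, ∃ x : G × G, p ∈ gfiber G g →
      x ∈ X ∧ (p ∈ ghoriz G x ∨ p ∈ gvert G x) := by
    intro p
    by_cases hp : p ∈ gfiber G g
    · have := hcov hp
      simp only [Set.mem_iUnion] at this
      obtain ⟨x, hxX, hxq⟩ := this
      refine ⟨x, fun _ => ⟨hxX, ?_⟩⟩
      rcases hxq with (hd | hh) | hv
      · exfalso
        obtain ⟨t, rfl⟩ := hd
        have hp2 : t * x.2 = t * x.1 * g := hp
        have hx2 : x.2 = x.1 * g := mul_left_cancel (hp2.trans (mul_assoc t x.1 g))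
        exact hg x hxX (by rw [hx2, inv_mul_cancel_left])
      · exact Or.inl hh
      · exact Or.inr hv
    · exact ⟨(1, 1), fun h => absurd h hp⟩
  choose f hf using hex
  set FH : Set (G × G) := {p | p ∈ gfiber G g ∧ p ∈ ghoriz G (f p)} with hFH
  set FV : Set (G × G) := {p | p ∈ gfiber G g ∧ p ∈ gvert G (f p)} with hFV
  have hsub : gfiber G g ⊆ FH ∪ FV := by
    intro p hp
    rcases (hf p hp).2 with h | h
    · exact Or.inl ⟨hp, h⟩
    · exact Or.inr ⟨hp, h⟩
  have hFHcard : FH.ncard ≤ X.ncard := by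
    apply Set.ncard_le_ncard_of_injOn f
    · intro p hp; exact (hf p hp.1).1
    · intro p hp q hq hpq
      obtain ⟨t, ht⟩ := hp.2
      obtain ⟨s, hs⟩ := hq.2
      have h2 : p.2 = q.2 := by
        rw [ht, hs, hpq]
      have h1 : p.1 = q.1 := by
        have hp1 : p.2 = p.1 * g := hp.1
        have hq1 : q.2 = q.1 * g := hq.1
        rw [hp1, hq1] at h2
        exact mul_right_cancel h2
      exact Prod.ext h1 h2
  have hFVcard : FV.ncard ≤ X.ncard := by
    apply Set.ncard_le_ncard_of_injOn f
    · intro p hp; exact (hf p hp.1).1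
    · intro p hp q hq hpq
      obtain ⟨t, ht⟩ := hp.2
      obtain ⟨s, hs⟩ := hq.2
      have h1 : p.1 = q.1 := by
        rw [ht, hs, hpq]
      have h2 : p.2 = q.2 := by
        rw [hp.1, hq.1, h1]
      exact Prod.ext h1 h2
  calc Fintype.card G = (gfiber G g).ncard := (gfiber_ncard G g).symm
    _ ≤ (FH ∪ FV).ncard := Set.ncard_le_ncard hsub (Set.toFinite _)
    _ ≤ FH.ncard + FV.ncard := Set.ncard_union_le _ _
    _ ≤ 2 * X.ncard := by omega

private lemma rep_bound (G : Type*) [Group G] [Fintype G] (X : Set (G × G)) (S : Set G)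
    (hrep : ∀ g ∈ S, ∃ x ∈ X, x.1⁻¹ * x.2 = g) : S.ncard ≤ X.ncard := by
  classical
  have hex : ∀ g : G, ∃ x : G × G, g ∈ S → x ∈ X ∧ x.1⁻¹ * x.2 = g := by
    intro g
    by_cases hg : g ∈ S
    · obtain ⟨x, hx1, hx2⟩ := hrep g hg
      exact ⟨x, fun _ => ⟨hx1, hx2⟩⟩
    · exact ⟨(1, 1), fun h => absurd h hg⟩
  choose f hf using hex
  apply Set.ncard_le_ncard_of_injOn f
  · intro g hg; exact (hf g hg).1
  · intro g hg h hh hgh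
    rw [← (hf g hg).2, ← (hf h hh).2, hgh]

theorem stmt_4 (G : Type*) [Group G] [Fintype G] (X : Set (G × G)) :
    ((Set.univ \ gdiag G (1, 1) ⊆ ⋃ x ∈ X, gquower G x) →
      ((Fintype.card G : ℚ) - 1) / 2 ≤ (X.ncard : ℚ)) ∧
    ((⋃ x ∈ X, gquower G x) = Set.univ →
      (Fintype.card G : ℚ) / 2 ≤ (X.ncard : ℚ)) := by
  classical
  constructor
  · intro hcov
    by_cases hall : ∀ g : G, g ≠ 1 → ∃ x ∈ X, x.1⁻¹ * x.2 = g
    · -- every nontrivial class is represented: |X| ≥ |G| - 1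
      have h1 : ({g : G | g ≠ 1}).ncard ≤ X.ncard :=
        rep_bound G X _ (fun g hg => hall g hg)
      have h2 : ({g : G | g ≠ 1}).ncard = Fintype.card G - 1 := by
        have : {g : G | g ≠ 1} = ({1}ᶜ : Set G) := by ext g; simp
        rw [this, Set.ncard_eq_toFinset_card', Set.toFinset_compl, Set.toFinset_singleton,
          Finset.card_compl, Finset.card_singleton]
      have hn : 1 ≤ Fintype.card G := Fintype.card_pos
      have : Fintype.card G - 1 ≤ X.ncard := h2 ▸ h1
      have h3 : Fintype.card G ≤ X.ncard + 1 := by omega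
      have h4 : (Fintype.card G : ℚ) ≤ (X.ncard : ℚ) + 1 := by exact_mod_cast h3
      have h5 : (0 : ℚ) ≤ (X.ncard : ℚ) := Nat.cast_nonneg _
      linarith
    · push_neg at hall
      obtain ⟨g, hg1, hg2⟩ := hall
      have hgne : ∀ x ∈ X, x.1⁻¹ * x.2 ≠ g := hg2
      have hfibsub : gfiber G g ⊆ ⋃ x ∈ X, gquower G x := by
        intro p hp
        apply hcov
        refine ⟨Set.mem_univ p, ?_⟩
        rintro ⟨t, hpt⟩
        apply hg1
        have h1 : p.1 = t := by rw [hpt]; simp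
        have h2 : p.2 = t := by rw [hpt]; simp
        have : p.2 = p.1 * g := hp
        rw [h1, h2] at this
        exact (mul_left_cancel (a := t) (by rw [← this, mul_one])).symm
      have hb := two_card_bound G X g hgne hfibsub
      have : (Fintype.card G : ℚ) ≤ 2 * (X.ncard : ℚ) := by exact_mod_cast hb
      linarith
  · intro hcov
    by_cases hall : ∀ g : G, ∃ x ∈ X, x.1⁻¹ * x.2 = g
    · have h1 : (Set.univ : Set G).ncard ≤ X.ncard :=
        rep_bound G X _ (fun g _ => hall g)
      have h2 : (Set.univ : Set G).ncard = Fintype.card G := by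
        rw [Set.ncard_univ, Nat.card_eq_fintype_card]
      have : Fintype.card G ≤ X.ncard := h2 ▸ h1
      have : (Fintype.card G : ℚ) ≤ (X.ncard : ℚ) := by exact_mod_cast this
      linarith
    · push_neg at hall
      obtain ⟨g, hg⟩ := hall
      have hgne : ∀ x ∈ X, x.1⁻¹ * x.2 ≠ g := by
        intro x hx hc
        exact (hg x hx) hc
      have hfibsub : gfiber G g ⊆ ⋃ x ∈ X, gquower G x := by
        rw [hcov]; exact fun p _ => Set.mem_univ p
      have hb := two_card_bound G X g hgne hfibsub
      have : (Fintype.card G : ℚ) ≤ 2 * (X.ncard : ℚ) := by exact_mod_cast hb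
      linarith
end

section
/- For every positive integer n, there exists a set X ⊆ (Z/4nZ)² with |X| = 2n such that the quowers QW(x), x ∈ X, cover (Z/4nZ)² minus the northeast diagonal D(1,1); explicitly, one may take X = {(2k, 4n+2-2k) : 1 ≤ k ≤ n} ∪ {(2n+2k, 2n-2k) : 1 ≤ k ≤ n-1} ∪ {(4n, 2n)}. -/
private lemma castval {N : ℕ} [NeZero N] {m : ℕ} {a : ZMod N} (h : m = a.val) :
    ((m : ℕ) : ZMod N) = a := by
  rw [h]; exact ZMod.natCast_rightInverse a

theorem stmt_5 (n : ℕ) (hn : 0 < n) :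
    let N := 4 * n
    let X : Set (ZMod N × ZMod N) :=
      {p | ∃ k : ℕ, 1 ≤ k ∧ k ≤ n ∧ p = (((2 * k : ℕ) : ZMod N), ((4 * n + 2 - 2 * k : ℕ) : ZMod N))} ∪
      {p | ∃ k : ℕ, 1 ≤ k ∧ k ≤ n - 1 ∧ p = (((2 * n + 2 * k : ℕ) : ZMod N), ((2 * n - 2 * k : ℕ) : ZMod N))} ∪
      {(((4 * n : ℕ) : ZMod N), ((2 * n : ℕ) : ZMod N))}
    X.ncard = 2 * n ∧ Set.univ \ diag N (1, 1) ⊆ ⋃ x ∈ X, quower N x := by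
  intro N X
  have hN : N = 4 * n := rfl
  haveI : NeZero N := ⟨by rw [hN]; omega⟩
  constructor
  · -- cardinality
    classical
    set F : ℕ → ZMod N × ZMod N := fun k =>
      if k ≤ n then (((2*k : ℕ) : ZMod N), ((4*n+2-2*k : ℕ) : ZMod N))
      else if k ≤ 2*n - 1 then (((2*n+2*(k-n) : ℕ) : ZMod N), ((2*n-2*(k-n) : ℕ) : ZMod N))
      else (((4*n : ℕ) : ZMod N), ((2*n : ℕ) : ZMod N)) with hF
    have hfst : ∀ m, 1 ≤ m → m ≤ 2*n → (F m).1 = ((2*m : ℕ) : ZMod N) := by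
      intro m h1 h2
      by_cases hc1 : m ≤ n
      · simp only [hF, if_pos hc1]
      · by_cases hc2 : m ≤ 2*n-1
        · simp only [hF, if_neg hc1, if_pos hc2]
          congr 1
          omega
        · simp only [hF, if_neg hc1, if_neg hc2]
          congr 1
          omega
    have hXeq : X = F '' Set.Icc 1 (2*n) := by
      simp only [X]
      ext p
      constructor
      · rintro ((⟨k, hk1, hk2, rfl⟩ | ⟨k, hk1, hk2, rfl⟩) | hp)
        · exact ⟨k, ⟨hk1, by omega⟩, by simp only [hF, if_pos hk2]⟩
        · refine ⟨n + k, ⟨by omega, by omega⟩, ?_⟩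
          have h1 : ¬ (n + k ≤ n) := by omega
          have h2 : n + k ≤ 2*n-1 := by omega
          simp only [hF, if_neg h1, if_pos h2, Nat.add_sub_cancel_left]
        · refine ⟨2*n, ⟨by omega, le_rfl⟩, ?_⟩
          have h1 : ¬ (2*n ≤ n) := by omega
          have h2 : ¬ (2*n ≤ 2*n-1) := by omega
          simp only [hF, if_neg h1, if_neg h2]
          exact (Set.mem_singleton_iff.mp hp).symm
      · rintro ⟨k, ⟨hk1, hk2⟩, rfl⟩
        by_cases hc1 : k ≤ n
        · exact Or.inl (Or.inl ⟨k, hk1, hc1, by simp only [hF, if_pos hc1]⟩)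
        · by_cases hc2 : k ≤ 2*n-1
          · refine Or.inl (Or.inr ⟨k - n, by omega, by omega, ?_⟩)
            simp only [hF, if_neg hc1, if_pos hc2]
          · refine Or.inr ?_
            simp only [hF, if_neg hc1, if_neg hc2]
            rfl
    rw [hXeq]
    rw [Set.ncard_image_of_injOn, ← Finset.coe_Icc, Set.ncard_coe_finset, Nat.card_Icc]
    · omega
    · intro a ha b hb h
      obtain ⟨ha1, ha2⟩ := ha
      obtain ⟨hb1, hb2⟩ := hb
      have h1 : ((2*a : ℕ) : ZMod N) = ((2*b : ℕ) : ZMod N) := by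
        rw [← hfst a ha1 ha2, ← hfst b hb1 hb2, h]
      have h2 := congrArg ZMod.val h1
      rw [ZMod.val_natCast, ZMod.val_natCast, hN] at h2
      by_cases hA : a = 2*n <;> by_cases hB : b = 2*n
      · omega
      · subst hA
        rw [show 2*(2*n) = 4*n by ring, Nat.mod_self,
          Nat.mod_eq_of_lt (by omega)] at h2
        omega
      · subst hB
        rw [show 2*(2*n) = 4*n by ring, Nat.mod_self,
          Nat.mod_eq_of_lt (by omega)] at h2
        omega
      · rw [Nat.mod_eq_of_lt (by omega), Nat.mod_eq_of_lt (by omega)] at h2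
        omega
  · -- coverage
    rintro ⟨x, y⟩ ⟨-, hp⟩
    have hxy : x ≠ y := by
      intro h
      refine hp ⟨x - 1, ?_⟩
      rw [h]
      show (y, y) = (1 + (y - 1), 1 + (y - 1))
      rw [show (1 : ZMod N) + (y - 1) = y by ring]
    have h4n0 : ((4*n : ℕ) : ZMod N) = 0 := by rw [← hN]; exact ZMod.natCast_self N
    have hhoriz : ∀ q ∈ X, q.2 = y → (x, y) ∈ ⋃ z ∈ X, quower N z := by
      intro q hq h2
      simp only [Set.mem_iUnion]
      exact ⟨q, hq, Or.inl (Or.inr ⟨x, by rw [h2]⟩)⟩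
    have hvert : ∀ q ∈ X, q.1 = x → (x, y) ∈ ⋃ z ∈ X, quower N z := by
      intro q hq h1
      simp only [Set.mem_iUnion]
      exact ⟨q, hq, Or.inr ⟨y, by rw [h1]⟩⟩
    have hdiag : ∀ q ∈ X, q.2 - q.1 = y - x → (x, y) ∈ ⋃ z ∈ X, quower N z := by
      intro q hq hd
      simp only [Set.mem_iUnion]
      refine ⟨q, hq, Or.inl (Or.inl ⟨x - q.1, ?_⟩)⟩
      have h1 : x = q.1 + (x - q.1) := by ring
      have h2 : y = q.2 + (x - q.1) := by linear_combination -hd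
      exact Prod.ext h1 h2
    have hxv : x.val < 4 * n := hN ▸ ZMod.val_lt x
    have hyv : y.val < 4 * n := hN ▸ ZMod.val_lt y
    by_cases hy : y.val % 2 = 0
    · -- y even: use a horizontal line
      by_cases h0 : y.val = 0
      · refine hhoriz (((2*1 : ℕ) : ZMod N), ((4*n+2-2*1 : ℕ) : ZMod N))
          (Or.inl (Or.inl ⟨1, le_rfl, hn, rfl⟩)) ?_
        show ((4*n+2-2*1 : ℕ) : ZMod N) = y
        rw [show (4*n+2-2*1 : ℕ) = 4*n by omega, h4n0]
        exact ((ZMod.val_eq_zero y).mp h0).symm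
      · by_cases h2n : y.val = 2*n
        · refine hhoriz (((4*n : ℕ) : ZMod N), ((2*n : ℕ) : ZMod N)) (Or.inr rfl) ?_
          exact castval h2n.symm
        · by_cases hlt : y.val < 2*n
          · refine hhoriz (((2*n+2*((2*n-y.val)/2) : ℕ) : ZMod N),
              ((2*n-2*((2*n-y.val)/2) : ℕ) : ZMod N))
              (Or.inl (Or.inr ⟨(2*n-y.val)/2, by omega, by omega, rfl⟩)) ?_
            exact castval (by omega)
          · refine hhoriz (((2*((4*n+2-y.val)/2) : ℕ) : ZMod N),
              ((4*n+2-2*((4*n+2-y.val)/2) : ℕ) : ZMod N))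
              (Or.inl (Or.inl ⟨(4*n+2-y.val)/2, by omega, by omega, rfl⟩)) ?_
            exact castval (by omega)
    · by_cases hx : x.val % 2 = 0
      · -- x even: use a vertical line
        by_cases h0 : x.val = 0
        · refine hvert (((4*n : ℕ) : ZMod N), ((2*n : ℕ) : ZMod N)) (Or.inr rfl) ?_
          show ((4*n : ℕ) : ZMod N) = x
          rw [h4n0]
          exact ((ZMod.val_eq_zero x).mp h0).symm
        · by_cases hle : x.val ≤ 2*n
          · refine hvert (((2*(x.val/2) : ℕ) : ZMod N),
              ((4*n+2-2*(x.val/2) : ℕ) : ZMod N))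
              (Or.inl (Or.inl ⟨x.val/2, by omega, by omega, rfl⟩)) ?_
            exact castval (by omega)
          · refine hvert (((2*n+2*((x.val-2*n)/2) : ℕ) : ZMod N),
              ((2*n-2*((x.val-2*n)/2) : ℕ) : ZMod N))
              (Or.inl (Or.inr ⟨(x.val-2*n)/2, by omega, by omega, rfl⟩)) ?_
            exact castval (by omega)
      · -- both odd: use a diagonal
        have hd0 : y - x ≠ 0 := sub_ne_zero.mpr (Ne.symm hxy)
        have hde : (y - x).val ≠ 0 := fun h => hd0 ((ZMod.val_eq_zero _).mp h)
        have hdlt : (y - x).val < 4 * n := hN ▸ ZMod.val_lt (y - x)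
        have hcast : (((y - x).val : ℕ) : ZMod N) = y - x := ZMod.natCast_rightInverse _
        have hpar : (y - x).val % 2 = 0 := by
          have h1 : (x + (y - x)).val = (x.val + (y - x).val) % N := ZMod.val_add _ _
          rw [show x + (y - x) = y by ring] at h1
          obtain ⟨t, ht1, ht2⟩ : ∃ t, y.val = t ∧ t % 2 = (x.val + (y - x).val) % 2 :=
            ⟨_, h1, Nat.mod_mod_of_dvd _ ⟨2*n, by omega⟩⟩
          omega
        by_cases h4 : (y - x).val % 4 = 2
        · -- difference ≡ 2 mod 4 : A family
          set k : ℕ := (4*n+2-(y - x).val)/4 with hk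
          refine hdiag (((2*k : ℕ) : ZMod N), ((4*n+2-2*k : ℕ) : ZMod N))
            (Or.inl (Or.inl ⟨k, by omega, by omega, rfl⟩)) ?_
          show ((4*n+2-2*k : ℕ) : ZMod N) - ((2*k : ℕ) : ZMod N) = y - x
          have hsum : (4*n+2-2*k : ℕ) = 2*k + (y - x).val := by omega
          rw [hsum, Nat.cast_add, hcast]
          ring
        · -- difference ≡ 0 mod 4 : B family
          set k : ℕ := (4*n-(y - x).val)/4 with hk
          refine hdiag (((2*n+2*k : ℕ) : ZMod N), ((2*n-2*k : ℕ) : ZMod N))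
            (Or.inl (Or.inr ⟨k, by omega, by omega, rfl⟩)) ?_
          show ((2*n-2*k : ℕ) : ZMod N) - ((2*n+2*k : ℕ) : ZMod N) = y - x
          have hsum : ((2*n+2*k) + (y - x).val : ℕ) = (2*n-2*k) + 4*n := by omega
          have h2 : ((2*n+2*k : ℕ) : ZMod N) + (y - x) = ((2*n-2*k : ℕ) : ZMod N) := by
            rw [← hcast, ← Nat.cast_add, hsum, Nat.cast_add, h4n0, add_zero]
          linear_combination -h2
end

section
/- For every even positive integer n, the minimum number of quowers needed to cover (Z/nZ)² minus the northeast diagonal D(1,1) equals n/2. -/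
noncomputable def xi (n : ℕ) : ℕ :=
  sInf {k | ∃ X : Set (ZMod n × ZMod n), X.ncard = k ∧ (⋃ x ∈ X, quower n x) = Set.univ}

noncomputable def xiD (n : ℕ) : ℕ :=
  sInf {k | ∃ X : Set (ZMod n × ZMod n), X.ncard = k ∧
    Set.univ \ diag n (1, 1) ⊆ ⋃ x ∈ X, quower n x}

section Helpers

variable {n : ℕ}

lemma mem_quower_vert {p q : ZMod n × ZMod n} (h : q.1 = p.1) : q ∈ quower n p :=
  Or.inr ⟨q.2, by rw [Prod.ext_iff]; exact ⟨h, rfl⟩⟩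

lemma mem_quower_horiz {p q : ZMod n × ZMod n} (h : q.2 = p.2) : q ∈ quower n p :=
  Or.inl (Or.inr ⟨q.1, by rw [Prod.ext_iff]; exact ⟨rfl, h⟩⟩)

lemma mem_quower_diag {p q : ZMod n × ZMod n} (h : q.2 = q.1 + (p.2 - p.1)) :
    q ∈ quower n p := by
  refine Or.inl (Or.inl ⟨q.1 - p.1, ?_⟩)
  rw [Prod.ext_iff]
  refine ⟨by ring, ?_⟩
  rw [h]
  ring

lemma ne_of_notMem_diag {q : ZMod n × ZMod n} (h : q ∉ diag n (1, 1)) : q.1 ≠ q.2 := by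
  intro hq
  refine h ⟨q.1 - 1, ?_⟩
  rw [Prod.ext_iff]
  constructor
  · show q.1 = (1 : ZMod n) + (q.1 - 1); ring
  · show q.2 = (1 : ZMod n) + (q.1 - 1); rw [← hq]; ring

lemma ncard_image_Iio (m : ℕ) (f : ℕ → ZMod n × ZMod n) (hinj : Set.InjOn f (Set.Iio m)) :
    (f '' Set.Iio m).ncard = m := by
  rw [Set.ncard_image_of_injOn hinj,
    show (Set.Iio m : Set ℕ) = ↑(Finset.range m) from by ext x; simp,
    Set.ncard_coe_finset, Finset.card_range]

lemma cast_eq_cast_of_eq_add {a b : ℕ} (h : a = b ∨ a = b + n ∨ b = a + n) :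
    ((a : ℕ) : ZMod n) = ((b : ℕ) : ZMod n) := by
  rcases h with h | h | h
  · rw [h]
  · subst h; push_cast [ZMod.natCast_self]; ring
  · subst h; push_cast [ZMod.natCast_self]; ring

lemma zmod_cast_eq [NeZero n] (y : ZMod n) (D : ℕ) (h : D = y.val ∨ D = y.val + n) :
    ((D : ℕ) : ZMod n) = y := by
  have h2 : ((D : ℕ) : ZMod n) = ((y.val : ℕ) : ZMod n) :=
    cast_eq_cast_of_eq_add (by tauto)
  rwa [ZMod.natCast_zmod_val] at h2

lemma zmod_add_cast [NeZero n] (x y : ZMod n) (D : ℕ)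
    (h : x.val + D = y.val ∨ x.val + D = y.val + n) : x + ((D : ℕ) : ZMod n) = y := by
  have h2 : ((x.val + D : ℕ) : ZMod n) = ((y.val : ℕ) : ZMod n) :=
    cast_eq_cast_of_eq_add (by tauto)
  push_cast at h2
  rwa [ZMod.natCast_zmod_val, ZMod.natCast_zmod_val] at h2

end Helpers

lemma xiD_lower (n k : ℕ) (hn : 0 < n) (he : Even n)
    (X : Set (ZMod n × ZMod n)) (hXcard : X.ncard = k)
    (hcov : Set.univ \ diag n (1, 1) ⊆ ⋃ x ∈ X, quower n x) : n / 2 ≤ k := by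
  haveI : NeZero n := ⟨hn.ne'⟩
  by_contra hlt
  push_neg at hlt
  -- find a nonzero offset c not used by any point of X
  set O : Set (ZMod n) := ((fun p : ZMod n × ZMod n => p.2 - p.1) '' X) ∪ {0} with hO_def
  have hOcard : O.ncard < n := by
    have h1 : O.ncard ≤ ((fun p : ZMod n × ZMod n => p.2 - p.1) '' X).ncard
        + ({0} : Set (ZMod n)).ncard := by
      rw [hO_def]; exact Set.ncard_union_le _ _
    have h2 := Set.ncard_image_le (s := X) (f := fun p : ZMod n × ZMod n => p.2 - p.1)
      (Set.toFinite X)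
    have h3 : ({0} : Set (ZMod n)).ncard = 1 := Set.ncard_singleton 0
    obtain ⟨w, hw⟩ := he
    omega
  have hOne : O ≠ Set.univ := by
    intro h
    rw [h, Set.ncard_univ, Nat.card_zmod] at hOcard
    omega
  obtain ⟨c, hc⟩ := (Set.ne_univ_iff_exists_notMem O).mp hOne
  have hc0 : c ≠ 0 := fun h => hc (Or.inr (by simp [h]))
  have key : ∀ x : ZMod n, ∃ p, p ∈ X ∧ (p.1 = x ∨ p.2 = x + c) := by
    intro x
    have hmem : (x, x + c) ∈ Set.univ \ diag n (1, 1) := by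
      refine ⟨trivial, fun hd => ?_⟩
      obtain ⟨t, ht⟩ := hd
      simp only [Prod.mk.injEq] at ht
      have hxc : x + c = x := by rw [ht.2, ← ht.1]
      exact hc0 (by rwa [add_eq_left] at hxc)
    have hm := hcov hmem
    simp only [Set.mem_iUnion] at hm
    obtain ⟨p, hpX, hpq⟩ := hm
    rcases hpq with (⟨t, ht⟩ | ⟨t, ht⟩) | ⟨t, ht⟩
    · exfalso
      simp only [Prod.mk.injEq] at ht
      obtain ⟨h1, h2⟩ := ht
      refine hc (Or.inl ⟨p, hpX, ?_⟩)
      show p.2 - p.1 = c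
      linear_combination h1 - h2
    · simp only [Prod.mk.injEq] at ht
      exact ⟨p, hpX, Or.inr ht.2.symm⟩
    · simp only [Prod.mk.injEq] at ht
      exact ⟨p, hpX, Or.inl ht.1.symm⟩
  choose p hpX hp using key
  have hXfin : X.Finite := Set.toFinite X
  haveI := hXfin.to_subtype
  have hinj : Function.Injective
      (fun x : ZMod n => ((⟨p x, hpX x⟩ : X), decide ((p x).1 = x))) := by
    intro a b hab
    simp only [Prod.mk.injEq, Subtype.mk.injEq] at hab
    obtain ⟨hpab, h2⟩ := hab
    by_cases ha : (p a).1 = a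
    · have hb' : decide ((p b).1 = b) = true := by
        rw [← h2]; exact decide_eq_true ha
      have hb : (p b).1 = b := of_decide_eq_true hb'
      rw [← ha, hpab, hb]
    · have hb' : decide ((p b).1 = b) = false := by
        rw [← h2]; exact decide_eq_false ha
      have hb : ¬(p b).1 = b := of_decide_eq_false hb'
      have h3 : (p a).2 = a + c := (hp a).resolve_left ha
      have h4 : (p b).2 = b + c := (hp b).resolve_left hb
      have h5 : a + c = b + c := by rw [← h3, hpab, h4]
      exact add_right_cancel h5
  have hcard := Nat.card_le_card_of_injective _ hinj
  rw [Nat.card_zmod, Nat.card_prod, Nat.card_coe_set_eq, hXcard,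
    Nat.card_eq_fintype_card, Fintype.card_bool] at hcard
  obtain ⟨w, hw⟩ := he
  omega

lemma cover_exists (n m : ℕ) (hn : n = 2 * m) (hm : 0 < m) :
    ∃ X : Set (ZMod n × ZMod n), X.ncard = m ∧
      Set.univ \ diag n (1, 1) ⊆ ⋃ x ∈ X, quower n x := by
  haveI : NeZero n := ⟨by omega⟩
  rcases Nat.even_or_odd m with ⟨r, hr⟩ | ⟨v, hv⟩
  · -- m even, m = r + r
    set σ : ℕ → ℕ := fun j => if j < r then 2 * j + 1 else 2 * j - m with hσ
    set f : ℕ → ZMod n × ZMod n :=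
      fun j => (((2 * j + 1 : ℕ) : ZMod n), ((2 * σ j + 1 : ℕ) : ZMod n)) with hf
    refine ⟨f '' Set.Iio m, ncard_image_Iio m f ?_, ?_⟩
    · intro j hj j' hj' hjj
      have h1 : ((2 * j + 1 : ℕ) : ZMod n) = ((2 * j' + 1 : ℕ) : ZMod n) :=
        congrArg Prod.fst hjj
      have h2 := congrArg ZMod.val h1
      rw [ZMod.val_cast_of_lt (by simp only [Set.mem_Iio] at hj; omega),
        ZMod.val_cast_of_lt (by simp only [Set.mem_Iio] at hj'; omega)] at h2
      omega
    · rintro ⟨x, y⟩ ⟨-, hdiag⟩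
      have hne : x ≠ y := ne_of_notMem_diag hdiag
      have hx : ((x.val : ℕ) : ZMod n) = x := ZMod.natCast_zmod_val x
      have hy : ((y.val : ℕ) : ZMod n) = y := ZMod.natCast_zmod_val y
      have hxlt : x.val < n := ZMod.val_lt x
      have hylt : y.val < n := ZMod.val_lt y
      rcases Nat.even_or_odd x.val with ⟨e, hxe⟩ | ⟨e, hxe⟩
      · -- x even
        rcases Nat.even_or_odd y.val with ⟨g, hyg⟩ | ⟨g, hyg⟩
        · -- y even : use a diagonal
          have hvne : e ≠ g := by
            intro h
            refine hne ?_
            rw [← hx, ← hy]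
            congr 1
            omega
          obtain ⟨c, hc1, hc2, hkey1⟩ :
              ∃ c, 1 ≤ c ∧ c ≤ m - 1 ∧ x + ((2 * c : ℕ) : ZMod n) = y := by
            by_cases hef : e < g
            · exact ⟨g - e, by omega, by omega, zmod_add_cast x y _ (Or.inl (by omega))⟩
            · exact ⟨g + m - e, by omega, by omega, zmod_add_cast x y _ (Or.inr (by omega))⟩
          obtain ⟨j, hj, hkey2⟩ :
              ∃ j, j < m ∧ ((2 * σ j + 1 : ℕ) : ZMod n)
                = ((2 * j + 1 : ℕ) : ZMod n) + ((2 * c : ℕ) : ZMod n) := by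
            by_cases hcr : c ≤ r
            · refine ⟨c - 1, by omega, ?_⟩
              have hσv : σ (c - 1) = 2 * (c - 1) + 1 := if_pos (by omega)
              rw [hσv,
                show ((2 * (2 * (c - 1) + 1) + 1 : ℕ) : ZMod n)
                  = (((2 * (c - 1) + 1) + 2 * c : ℕ) : ZMod n) from
                  cast_eq_cast_of_eq_add (Or.inl (by omega))]
              push_cast
              ring
            · refine ⟨c, by omega, ?_⟩
              have hσv : σ c = 2 * c - m := if_neg (by omega)
              rw [hσv,
                show ((2 * (2 * c - m) + 1 : ℕ) : ZMod n)
                  = (((2 * c + 1) + 2 * c : ℕ) : ZMod n) from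
                  cast_eq_cast_of_eq_add (Or.inr (Or.inr (by omega)))]
              push_cast
              ring
          refine Set.mem_iUnion₂.mpr ⟨f j, ⟨j, Set.mem_Iio.mpr hj, rfl⟩, mem_quower_diag ?_⟩
          show y = x + (((2 * σ j + 1 : ℕ) : ZMod n) - ((2 * j + 1 : ℕ) : ZMod n))
          rw [hkey2, ← hkey1]
          ring
        · -- y odd : use a horizontal line
          have hglt : g < m := by omega
          obtain ⟨j, hj, hσj⟩ : ∃ j, j < m ∧ σ j = g := by
            rcases Nat.even_or_odd g with ⟨u, hu⟩ | ⟨u, hu⟩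
            · refine ⟨u + r, by omega, ?_⟩
              have : σ (u + r) = 2 * (u + r) - m := if_neg (by omega)
              omega
            · refine ⟨u, by omega, ?_⟩
              have : σ u = 2 * u + 1 := if_pos (by omega)
              omega
          refine Set.mem_iUnion₂.mpr ⟨f j, ⟨j, Set.mem_Iio.mpr hj, rfl⟩, mem_quower_horiz ?_⟩
          show y = ((2 * σ j + 1 : ℕ) : ZMod n)
          rw [hσj]
          exact (zmod_cast_eq y _ (Or.inl (by omega))).symm
      · -- x odd : use a vertical line
        have helt : e < m := by omega
        refine Set.mem_iUnion₂.mpr ⟨f e, ⟨e, Set.mem_Iio.mpr helt, rfl⟩, mem_quower_vert ?_⟩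
        show x = ((2 * e + 1 : ℕ) : ZMod n)
        exact (zmod_cast_eq x _ (Or.inl (by omega))).symm
  · -- m odd, m = 2v + 1
    set f : ℕ → ZMod n × ZMod n :=
      fun j => (((2 * j : ℕ) : ZMod n), ((4 * j + 1 : ℕ) : ZMod n)) with hf
    refine ⟨f '' Set.Iio m, ncard_image_Iio m f ?_, ?_⟩
    · intro j hj j' hj' hjj
      have h1 : ((2 * j : ℕ) : ZMod n) = ((2 * j' : ℕ) : ZMod n) :=
        congrArg Prod.fst hjj
      have h2 := congrArg ZMod.val h1
      rw [ZMod.val_cast_of_lt (by simp only [Set.mem_Iio] at hj; omega),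
        ZMod.val_cast_of_lt (by simp only [Set.mem_Iio] at hj'; omega)] at h2
      omega
    · rintro ⟨x, y⟩ ⟨-, hdiag⟩
      have hx : ((x.val : ℕ) : ZMod n) = x := ZMod.natCast_zmod_val x
      have hy : ((y.val : ℕ) : ZMod n) = y := ZMod.natCast_zmod_val y
      have hxlt : x.val < n := ZMod.val_lt x
      have hylt : y.val < n := ZMod.val_lt y
      rcases Nat.even_or_odd x.val with ⟨e, hxe⟩ | ⟨e, hxe⟩
      · -- x even : vertical line
        have helt : e < m := by omega
        refine Set.mem_iUnion₂.mpr ⟨f e, ⟨e, Set.mem_Iio.mpr helt, rfl⟩, mem_quower_vert ?_⟩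
        show x = ((2 * e : ℕ) : ZMod n)
        exact (zmod_cast_eq x _ (Or.inl (by omega))).symm
      · -- x odd
        rcases Nat.even_or_odd y.val with ⟨g, hyg⟩ | ⟨g, hyg⟩
        · -- y even : diagonal
          obtain ⟨j, hj, hkey⟩ :
              ∃ j, j < m ∧ x + ((2 * j + 1 : ℕ) : ZMod n) = y := by
            by_cases hef : e < g
            · exact ⟨g - e - 1, by omega, zmod_add_cast x y _ (Or.inl (by omega))⟩
            · exact ⟨g + m - e - 1, by omega, zmod_add_cast x y _ (Or.inr (by omega))⟩
          refine Set.mem_iUnion₂.mpr ⟨f j, ⟨j, Set.mem_Iio.mpr hj, rfl⟩, mem_quower_diag ?_⟩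
          show y = x + (((4 * j + 1 : ℕ) : ZMod n) - ((2 * j : ℕ) : ZMod n))
          rw [show ((4 * j + 1 : ℕ) : ZMod n) - ((2 * j : ℕ) : ZMod n)
              = ((2 * j + 1 : ℕ) : ZMod n) from by push_cast; ring, ← hkey]
        · -- y odd : horizontal line
          have hglt : g < m := by omega
          obtain ⟨j, hj, hkey⟩ : ∃ j, j < m ∧ ((4 * j + 1 : ℕ) : ZMod n) = y := by
            rcases Nat.even_or_odd g with ⟨u, hu⟩ | ⟨u, hu⟩
            · exact ⟨u, by omega, zmod_cast_eq y _ (Or.inl (by omega))⟩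
            · exact ⟨u + v + 1, by omega, zmod_cast_eq y _ (Or.inr (by omega))⟩
          refine Set.mem_iUnion₂.mpr ⟨f j, ⟨j, Set.mem_Iio.mpr hj, rfl⟩, mem_quower_horiz ?_⟩
          show y = ((4 * j + 1 : ℕ) : ZMod n)
          exact hkey.symm

theorem stmt_6 (n : ℕ) (hn : 0 < n) (he : Even n) : xiD n = n / 2 := by
  haveI : NeZero n := ⟨hn.ne'⟩
  obtain ⟨m, hm⟩ := he
  have hn2 : n = 2 * m := by omega
  have hm0 : 0 < m := by omega
  obtain ⟨X, hX1, hX2⟩ := cover_exists n m hn2 hm0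
  unfold xiD
  apply le_antisymm
  · exact Nat.sInf_le ⟨X, by omega, hX2⟩
  · refine le_csInf ⟨m, X, hX1, hX2⟩ ?_
    rintro k ⟨Y, hY1, hY2⟩
    exact xiD_lower n k hn ⟨m, hm⟩ Y hY1 hY2
end

section
/- For every positive integer n with n ≡ 2 (mod 4), the minimum number of quowers needed to cover the full toroidal board (Z/nZ)² equals n/2. -/
def gmap (n m : ℕ) (i : Fin m) : ZMod n × ZMod n :=
  (((2 * (i : ℕ) : ℕ) : ZMod n), ((4 * (i : ℕ) : ℕ) : ZMod n))

theorem stmt_7 (n : ℕ) (hn : 0 < n) (hmod : n % 4 = 2) : xi n = n / 2 := by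
  haveI : NeZero n := ⟨hn.ne'⟩
  set m := n / 2 with hm
  have hn2 : n = 2 * m := by omega
  have hmo : m % 2 = 1 := by omega
  have hmpos : 0 < m := by omega
  -- representation lemmas
  have castval : ∀ z : ZMod n, ((z.val : ℕ) : ZMod n) = z := by
    intro z; simp [ZMod.natCast_val, ZMod.cast_id]
  have repA : ∀ z : ZMod n, z.val % 2 = 0 → ∃ i : Fin m, z = ((2 * (i : ℕ) : ℕ) : ZMod n) := by
    intro z hz
    have hlt : z.val < n := ZMod.val_lt z
    refine ⟨⟨z.val / 2, by omega⟩, ?_⟩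
    have h2 : 2 * ((⟨z.val / 2, by omega⟩ : Fin m) : ℕ) = z.val := by
      simp only []; omega
    rw [h2, castval]
  have repB : ∀ z : ZMod n, z.val % 2 = 0 → ∃ i : Fin m, z = ((4 * (i : ℕ) : ℕ) : ZMod n) := by
    intro z hz
    obtain ⟨i, hi⟩ := repA z hz
    set t := (i : ℕ) with ht
    have hit : t < m := i.isLt
    by_cases htp : t % 2 = 0
    · refine ⟨⟨t / 2, by omega⟩, ?_⟩
      have h4 : 4 * ((⟨t / 2, by omega⟩ : Fin m) : ℕ) = 2 * t := by
        simp only []; omega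
      rw [h4]; exact hi
    · refine ⟨⟨(t + m) / 2, by omega⟩, ?_⟩
      have h4 : 4 * ((⟨(t + m) / 2, by omega⟩ : Fin m) : ℕ) = 2 * t + n := by
        simp only []; omega
      have : ((4 * ((⟨(t + m) / 2, by omega⟩ : Fin m) : ℕ) : ℕ) : ZMod n)
          = ((2 * t : ℕ) : ZMod n) := by
        rw [h4]; push_cast [ZMod.natCast_self]; ring
      rw [this]; exact hi
  -- cover
  have hcov : (⋃ x ∈ Set.range (gmap n m), quower n x) = Set.univ := by
    rw [Set.eq_univ_iff_forall]
    rintro ⟨x, y⟩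
    have key : ∃ i : Fin m, (x, y) ∈ quower n (gmap n m i) := by
      by_cases hx : x.val % 2 = 0
      · obtain ⟨i, hi⟩ := repA x hx
        refine ⟨i, Or.inr ⟨y, ?_⟩⟩
        simp only [gmap]; rw [← hi]
      · by_cases hy : y.val % 2 = 0
        · obtain ⟨i, hi⟩ := repB y hy
          refine ⟨i, Or.inl (Or.inr ⟨x, ?_⟩)⟩
          simp only [gmap]; rw [← hi]
        · have hx' : x.val % 2 = 1 := by omega
          have hy' : y.val % 2 = 1 := by omega
          have hzv : (y - x).val % 2 = 0 := by
            have h1 : ((y - x) + x).val = ((y - x).val + x.val) % n := ZMod.val_add _ _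
            have h2 : (y - x) + x = y := by ring
            rw [h2] at h1
            have h3 := Nat.mod_mod_of_dvd ((y - x).val + x.val) (⟨m, hn2⟩ : 2 ∣ n)
            omega
          obtain ⟨i, hi⟩ := repA (y - x) hzv
          set c := ((2 * (i : ℕ) : ℕ) : ZMod n) with hc
          have h42 : ((4 * (i : ℕ) : ℕ) : ZMod n) = c + c := by
            rw [hc]; push_cast; ring
          refine ⟨i, Or.inl (Or.inl ⟨x - c, ?_⟩)⟩
          simp only [gmap]
          rw [h42, Prod.mk.injEq]
          constructor
          · ring
          · linear_combination hi
    obtain ⟨i, hi⟩ := key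
    exact Set.mem_biUnion ⟨i, rfl⟩ hi
  -- cardinality of the construction
  have hinj : Function.Injective (gmap n m) := by
    intro i j h
    have h1 := congrArg Prod.fst h
    simp only [gmap] at h1
    rw [ZMod.natCast_eq_natCast_iff] at h1
    have h2 : 2 * (i : ℕ) % n = 2 * (j : ℕ) % n := h1
    have hi := i.isLt
    have hj := j.isLt
    rw [Nat.mod_eq_of_lt (by omega), Nat.mod_eq_of_lt (by omega)] at h2
    exact Fin.ext (by omega)
  have hcard : (Set.range (gmap n m)).ncard = m := by
    rw [← Set.image_univ, Set.ncard_image_of_injective _ hinj, Set.ncard_univ,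
      Nat.card_eq_fintype_card, Fintype.card_fin]
  have hmem : m ∈ {k | ∃ X : Set (ZMod n × ZMod n), X.ncard = k ∧
      (⋃ x ∈ X, quower n x) = Set.univ} := ⟨Set.range (gmap n m), hcard, hcov⟩
  -- lower bound
  have hlb : ∀ k ∈ {k | ∃ X : Set (ZMod n × ZMod n), X.ncard = k ∧
      (⋃ x ∈ X, quower n x) = Set.univ}, m ≤ k := by
    rintro k ⟨X, hX, hXcov⟩
    by_contra hk
    push_neg at hk
    have hXfin : X.Finite := Set.toFinite X
    have hnn : n ≤ n * n := Nat.le_mul_of_pos_left n hn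
    have hcardZ : (Set.univ : Set (ZMod n)).ncard = n := by
      rw [Set.ncard_univ, Nat.card_eq_fintype_card, ZMod.card]
    have hcardZ2 : (Set.univ : Set (ZMod n × ZMod n)).ncard = n * n := by
      rw [Set.ncard_univ, Nat.card_eq_fintype_card, Fintype.card_prod, ZMod.card]
    have hD : ((fun p : ZMod n × ZMod n => p.2 - p.1) '' X).ncard ≤ k := by
      rw [← hX]; exact Set.ncard_image_le hXfin
    obtain ⟨d, hd⟩ : ∃ d, d ∉ (fun p : ZMod n × ZMod n => p.2 - p.1) '' X := by
      by_contra h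
      push_neg at h
      have heq : (fun p : ZMod n × ZMod n => p.2 - p.1) '' X = Set.univ :=
        Set.eq_univ_of_forall h
      rw [heq, hcardZ] at hD
      omega
    have hB1 : (Prod.fst '' X).ncard ≤ k := by
      rw [← hX]; exact Set.ncard_image_le hXfin
    have hB2 : ((fun y => y - d) '' (Prod.snd '' X)).ncard ≤ k := by
      calc ((fun y => y - d) '' (Prod.snd '' X)).ncard
          ≤ (Prod.snd '' X).ncard := Set.ncard_image_le (hXfin.image _)
        _ ≤ k := by rw [← hX]; exact Set.ncard_image_le hXfin
    have hBcard : ((Prod.fst '' X) ∪ ((fun y => y - d) '' (Prod.snd '' X))).ncard ≤ 2 * k := by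
      calc ((Prod.fst '' X) ∪ ((fun y => y - d) '' (Prod.snd '' X))).ncard
          ≤ (Prod.fst '' X).ncard + ((fun y => y - d) '' (Prod.snd '' X)).ncard :=
            Set.ncard_union_le _ _
        _ ≤ 2 * k := by omega
    obtain ⟨x, hx⟩ : ∃ x, x ∉ (Prod.fst '' X) ∪ ((fun y => y - d) '' (Prod.snd '' X)) := by
      by_contra h
      push_neg at h
      have heq : (Prod.fst '' X) ∪ ((fun y => y - d) '' (Prod.snd '' X)) = Set.univ :=
        Set.eq_univ_of_forall h
      rw [heq, hcardZ] at hBcard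
      omega
    have hxmem : (x, x + d) ∈ ⋃ p ∈ X, quower n p := by
      rw [hXcov]; exact Set.mem_univ _
    rw [Set.mem_iUnion₂] at hxmem
    obtain ⟨p, hp, hq⟩ := hxmem
    rcases hq with (hdia | hhor) | hver
    · obtain ⟨t, ht⟩ := hdia
      rw [Prod.mk.injEq] at ht
      obtain ⟨h1, h2⟩ := ht
      exact hd ⟨p, hp, by linear_combination h1 - h2⟩
    · obtain ⟨t, ht⟩ := hhor
      rw [Prod.mk.injEq] at ht
      obtain ⟨h1, h2⟩ := ht
      exact hx (Or.inr ⟨p.2, ⟨p, hp, rfl⟩, by linear_combination -h2⟩)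
    · obtain ⟨t, ht⟩ := hver
      rw [Prod.mk.injEq] at ht
      obtain ⟨h1, h2⟩ := ht
      exact hx (Or.inl ⟨p, hp, h1.symm⟩)
  exact le_antisymm (Nat.sInf_le hmem) (le_csInf ⟨m, hmem⟩ hlb)
end

section
/- For every positive integer n, the minimum number of quowers needed to cover the full toroidal board (Z/4nZ)² equals 2n + 1. -/
open Finset

def IsQuowerCover {m : ℕ} (X : Set (ZMod m × ZMod m)) : Prop :=
  ∀ p q : ZMod m, ∃ x ∈ X, p = x.1 ∨ q = x.2 ∨ p - q = x.1 - x.2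

lemma mem_quower {m : ℕ} {x z : ZMod m × ZMod m} :
    z ∈ quower m x ↔ z.1 = x.1 ∨ z.2 = x.2 ∨ z.1 - z.2 = x.1 - x.2 := by
  constructor
  · rintro ((⟨t, rfl⟩ | ⟨t, rfl⟩) | ⟨t, rfl⟩)
    · exact Or.inr (Or.inr (by ring))
    · exact Or.inr (Or.inl rfl)
    · exact Or.inl rfl
  · rintro (h | h | h)
    · exact Or.inr ⟨z.2, Prod.ext h rfl⟩
    · exact Or.inl (Or.inr ⟨z.1, Prod.ext rfl h⟩)
    · exact Or.inl (Or.inl ⟨z.2 - x.2, Prod.ext (by linear_combination h) (by ring)⟩)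

lemma iUnion_quower_eq_univ_iff {m : ℕ} (X : Set (ZMod m × ZMod m)) :
    (⋃ x ∈ X, quower m x) = Set.univ ↔ IsQuowerCover X := by
  simp only [Set.eq_univ_iff_forall, Set.mem_iUnion, mem_quower, exists_prop, Prod.forall,
    IsQuowerCover]

lemma xi_eq {m k : ℕ} [NeZero m] {F : Finset (ZMod m × ZMod m)}
    (hF : IsQuowerCover (F : Set (ZMod m × ZMod m))) (hFk : #F ≤ k)
    (hk : ∀ F : Finset (ZMod m × ZMod m), IsQuowerCover (F : Set (ZMod m × ZMod m)) → k ≤ #F) :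
    xi m = k := by
  have hlower : ∀ X : Set (ZMod m × ZMod m), IsQuowerCover X → k ≤ X.ncard := by
    intro X hX
    rw [← (Set.toFinite X).coe_toFinset] at hX ⊢
    rw [Set.ncard_coe_finset]
    exact hk _ hX
  have hF' : (⋃ x ∈ (F : Set _), quower m x) = Set.univ := (iUnion_quower_eq_univ_iff _).2 hF
  refine le_antisymm (Nat.sInf_le ⟨F, ?_, hF'⟩) (le_csInf ⟨_, F, rfl, hF'⟩ ?_)
  · rw [Set.ncard_coe_finset]
    exact le_antisymm hFk (hk F hF)
  · rintro _ ⟨X, rfl, hX⟩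
    exact hlower X ((iUnion_quower_eq_univ_iff X).1 hX)

lemma exists_natCast_eq {N : ℕ} [NeZero N] (x : ZMod N) : ∃ a < N, (a : ZMod N) = x :=
  ⟨x.val, x.val_lt, x.natCast_zmod_val⟩

lemma sum_image_sub_eq_of_card_eq {G : Type*} [AddCommGroup G] [DecidableEq G]
    {F : Finset (G × G)} (h₁ : #(F.image Prod.fst) = #F) (h₂ : #(F.image Prod.snd) = #F)
    (h₃ : #(F.image fun x => x.1 - x.2) = #F) :
    ∑ d ∈ F.image (fun x => x.1 - x.2), d =
      ∑ a ∈ F.image Prod.fst, a - ∑ b ∈ F.image Prod.snd, b := by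
  rw [sum_image (card_image_iff.1 h₃), sum_image (card_image_iff.1 h₁),
    sum_image (card_image_iff.1 h₂), sum_sub_distrib]

section Parity

variable {n : ℕ}

def parity : ZMod (4 * n) →+* ZMod 2 :=
  ZMod.castHom (dvd_mul_of_dvd_left (by norm_num) n) (ZMod 2)

lemma injOn_natCast_two_mul :
    Set.InjOn (fun j : ℕ => ((2 * j : ℕ) : ZMod (4 * n))) (range (2 * n)) := by
  intro i hi j hj h
  simp only [coe_range, Set.mem_Iio] at hi hj
  have := congrArg ZMod.val h
  simp only at this
  rw [ZMod.val_cast_of_lt (by omega), ZMod.val_cast_of_lt (by omega)] at this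
  omega

variable [NeZero n]

lemma parity_eq_zero_iff (x : ZMod (4 * n)) : parity x = 0 ↔ Even x.val := by
  conv_lhs => rw [← ZMod.natCast_zmod_val x]
  rw [map_natCast, ZMod.natCast_eq_zero_iff_even]

lemma parity_eq_of_nsmul_eq {x y : ZMod (4 * n)} (h : (2 * n) • x = (2 * n) • y) :
    parity x = parity y := by
  rw [← sub_eq_zero, ← map_sub, parity_eq_zero_iff, even_iff_two_dvd]
  have hxy : (((2 * n * (x - y).val : ℕ)) : ZMod (4 * n)) = 0 := by
    rw [Nat.cast_mul, ZMod.natCast_zmod_val, ← nsmul_eq_mul, nsmul_sub, h, sub_self]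
  obtain ⟨k, hk⟩ := (ZMod.natCast_eq_zero_iff _ _).1 hxy
  exact ⟨k, Nat.eq_of_mul_eq_mul_left (by have := NeZero.pos n; omega : 0 < 2 * n)
    (by rw [hk]; ring)⟩

lemma two_mul_natCast_ne_zero : (2 * n : ZMod (4 * n)) ≠ 0 := by
  intro h
  have h' : ((2 * n : ℕ) : ZMod (4 * n)) = 0 := by exact_mod_cast h
  rw [ZMod.natCast_eq_zero_iff] at h'
  have := NeZero.pos n
  have := Nat.le_of_dvd (by omega) h'
  omega

def parityClass (c : ZMod (4 * n)) : Finset (ZMod (4 * n)) := {x | parity x = parity c}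

lemma mem_parityClass {c x : ZMod (4 * n)} : x ∈ parityClass c ↔ parity x = parity c := by
  simp [parityClass]

lemma parityClass_eq_image_add (c : ZMod (4 * n)) :
    parityClass c = (parityClass 0).image (· + c) := by
  ext x
  simp only [mem_image, mem_parityClass, map_zero]
  constructor
  · intro h
    exact ⟨x - c, by rw [map_sub, h, sub_self], sub_add_cancel x c⟩
  · rintro ⟨y, hy, rfl⟩
    rw [map_add, hy, zero_add]

lemma parityClass_zero_eq_image :
    parityClass (0 : ZMod (4 * n)) =
      (range (2 * n)).image fun j : ℕ => ((2 * j : ℕ) : ZMod (4 * n)) := by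
  ext x
  simp only [mem_parityClass, map_zero, parity_eq_zero_iff, mem_image, mem_range]
  constructor
  · rintro ⟨j, hj⟩
    refine ⟨j, by have := x.val_lt; omega, ?_⟩
    rw [two_mul, ← hj, ZMod.natCast_zmod_val]
  · rintro ⟨j, hj, rfl⟩
    rw [ZMod.val_cast_of_lt (by omega)]
    exact even_two_mul j

lemma card_parityClass (c : ZMod (4 * n)) : #(parityClass c) = 2 * n := by
  rw [parityClass_eq_image_add, card_image_of_injective _ (add_left_injective c),
    parityClass_zero_eq_image, card_image_of_injOn injOn_natCast_two_mul, card_range]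

lemma sum_parityClass_zero : ∑ x ∈ parityClass (0 : ZMod (4 * n)), x = 2 * n := by
  have hsum : ∑ j ∈ range (2 * n), 2 * j = 2 * n * (2 * n - 1) := by
    rw [← mul_sum, mul_comm, sum_range_id_mul_two]
  have h4n : (4 * n : ZMod (4 * n)) = 0 := by exact_mod_cast ZMod.natCast_self (4 * n)
  rw [parityClass_zero_eq_image, sum_image injOn_natCast_two_mul, ← Nat.cast_sum, hsum,
    Nat.cast_mul, Nat.cast_sub (by have := NeZero.pos n; omega)]
  push_cast
  linear_combination ((n : ZMod (4 * n)) - 1) * h4n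

lemma sum_parityClass (c : ZMod (4 * n)) : ∑ x ∈ parityClass c, x = 2 * n * (c + 1) := by
  rw [parityClass_eq_image_add, sum_image (add_left_injective c).injOn, sum_add_distrib,
    sum_const, card_parityClass, nsmul_eq_mul, sum_parityClass_zero]
  push_cast
  ring

lemma compl_parityClass (c : ZMod (4 * n)) : (parityClass c)ᶜ = parityClass (c + 1) := by
  ext x
  simp only [mem_compl, mem_parityClass, map_add, map_one]
  generalize parity x = a
  generalize parity c = b
  revert a b
  decide

lemma eq_parityClass_of_subset {X : Finset (ZMod (4 * n))} {c : ZMod (4 * n)}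
    (hX : X ⊆ parityClass c) (hcard : 2 * n ≤ #X) : X = parityClass c :=
  eq_of_subset_of_card_le hX (by rwa [card_parityClass])

end Parity

section LowerBound

variable {n : ℕ} [NeZero n]

lemma eq_parityClass_of_sub_mem {S T D : Finset (ZMod (4 * n))} (hS : 2 * n ≤ #S)
    (hT : 2 * n ≤ #T) (hD : #D ≤ 2 * n) (hSTD : ∀ s ∈ S, ∀ t ∈ T, s - t ∈ D)
    {s₀ t₀ : ZMod (4 * n)} (hs₀ : s₀ ∈ S) (ht₀ : t₀ ∈ T) :
    S = parityClass s₀ ∧ T = parityClass t₀ ∧ D = parityClass (s₀ - t₀) := by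
  have hDS : ∀ t ∈ T, S.image (· - t) = D := fun t ht =>
    eq_of_subset_of_card_le (image_subset_iff.2 fun s hs => hSTD s hs t ht)
      (by rw [card_image_of_injective _ (sub_left_injective)]; omega)
  have hDT : ∀ s ∈ S, T.image (s - ·) = D := fun s hs =>
    eq_of_subset_of_card_le (image_subset_iff.2 fun t ht => hSTD s hs t ht)
      (by rw [card_image_of_injective _ (sub_right_injective)]; omega)
  have hScard : #S = 2 * n := by
    have := card_image_of_injective S (sub_left_injective (b := t₀))
    rw [hDS t₀ ht₀] at this
    omega
  have hTcard : #T = 2 * n := by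
    have := card_image_of_injective T (sub_right_injective (b := s₀))
    rw [hDT s₀ hs₀] at this
    omega
  have hsumT : ∀ t ∈ T, ∑ d ∈ D, d = ∑ s ∈ S, s - (2 * n) • t := fun t ht => by
    rw [← hDS t ht, sum_image sub_left_injective.injOn, sum_sub_distrib, sum_const, hScard]
  have hsumS : ∀ s ∈ S, ∑ d ∈ D, d = (2 * n) • s - ∑ t ∈ T, t := fun s hs => by
    rw [← hDT s hs, sum_image sub_right_injective.injOn, sum_sub_distrib, sum_const, hTcard]
  have hT' : T = parityClass t₀ := by
    refine eq_parityClass_of_subset (fun t ht => mem_parityClass.2 ?_) hT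
    exact parity_eq_of_nsmul_eq (sub_right_injective ((hsumT t ht).symm.trans (hsumT t₀ ht₀)))
  have hS' : S = parityClass s₀ := by
    refine eq_parityClass_of_subset (fun s hs => mem_parityClass.2 ?_) hS
    exact parity_eq_of_nsmul_eq (sub_left_injective ((hsumS s hs).symm.trans (hsumS s₀ hs₀)))
  rw [← hDS t₀ ht₀, hS', hT']
  refine ⟨rfl, rfl, eq_parityClass_of_subset ?_ ?_⟩
  intro d hd
  · obtain ⟨s, hs, rfl⟩ := mem_image.1 hd
    rw [mem_parityClass, map_sub, map_sub, mem_parityClass.1 hs]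
  · rw [card_image_of_injective _ sub_left_injective, card_parityClass]

lemma two_mul_add_one_le_card {F : Finset (ZMod (4 * n) × ZMod (4 * n))}
    (hF : IsQuowerCover (F : Set (ZMod (4 * n) × ZMod (4 * n)))) : 2 * n + 1 ≤ #F := by
  by_contra! hF2
  have hn := NeZero.pos n
  set A := F.image Prod.fst with hA
  set B := F.image Prod.snd with hB
  set D := F.image fun x => x.1 - x.2 with hD
  have hAF : #A ≤ #F := card_image_le
  have hBF : #B ≤ #F := card_image_le
  have hDF : #D ≤ #F := card_image_le
  have hcompl : ∀ X : Finset (ZMod (4 * n)), #X ≤ 2 * n → 2 * n ≤ #Xᶜ := by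
    intro X hX
    rw [card_compl, ZMod.card]
    omega
  have hSTD : ∀ s ∈ Aᶜ, ∀ t ∈ Bᶜ, s - t ∈ D := by
    intro s hs t ht
    obtain ⟨x, hx, h | h | h⟩ := hF s t
    · exact absurd (h ▸ mem_image_of_mem Prod.fst hx) (mem_compl.1 hs)
    · exact absurd (h ▸ mem_image_of_mem Prod.snd hx) (mem_compl.1 ht)
    · exact mem_image.2 ⟨x, hx, h.symm⟩
  obtain ⟨s₀, hs₀⟩ : Aᶜ.Nonempty := card_pos.1 (by have := hcompl A (by omega); omega)
  obtain ⟨t₀, ht₀⟩ : Bᶜ.Nonempty := card_pos.1 (by have := hcompl B (by omega); omega)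
  obtain ⟨hS, hT, hD'⟩ :=
    eq_parityClass_of_sub_mem (hcompl A (by omega)) (hcompl B (by omega)) (by omega) hSTD hs₀ ht₀
  have hA' : A = parityClass (s₀ + 1) := by rw [← compl_parityClass, ← hS, compl_compl]
  have hB' : B = parityClass (t₀ + 1) := by rw [← compl_parityClass, ← hT, compl_compl]
  have hAc : #A = 2 * n := hA' ▸ card_parityClass _
  have hBc : #B = 2 * n := hB' ▸ card_parityClass _
  have hDc : #D = 2 * n := hD' ▸ card_parityClass _
  have hsum := sum_image_sub_eq_of_card_eq (F := F) (show #A = #F by omega)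
    (show #B = #F by omega) (show #D = #F by omega)
  rw [← hA, ← hB, ← hD, hA', hB', hD', sum_parityClass, sum_parityClass, sum_parityClass] at hsum
  exact two_mul_natCast_ne_zero (by linear_combination hsum)

end LowerBound

def quowerCover (n : ℕ) : Finset (ZMod (4 * n) × ZMod (4 * n)) :=
  insert ((2 * n : ZMod (4 * n)), 0)
    ((range n).image (fun k : ℕ => ((2 * k + 1 : ZMod (4 * n)), 4 * k + 1)) ∪
      (range n).image (fun k : ℕ => ((2 * n + 2 * k + 1 : ZMod (4 * n)), 4 * k + 3)))

section UpperBound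

variable {n : ℕ}

lemma card_quowerCover_le : #(quowerCover n) ≤ 2 * n + 1 := by
  refine (card_insert_le _ _).trans (Nat.succ_le_succ ((card_union_le _ _).trans ?_))
  refine (add_le_add card_image_le card_image_le).trans ?_
  rw [card_range]
  omega

lemma mk_mem_quowerCover_left {k : ℕ} (hk : k < n) :
    ((2 * k + 1 : ZMod (4 * n)), (4 * k + 1 : ZMod (4 * n))) ∈ quowerCover n :=
  mem_insert_of_mem (mem_union_left _ (mem_image_of_mem _ (mem_range.2 hk)))

lemma mk_mem_quowerCover_right {k : ℕ} (hk : k < n) :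
    ((2 * n + 2 * k + 1 : ZMod (4 * n)), (4 * k + 3 : ZMod (4 * n))) ∈ quowerCover n :=
  mem_insert_of_mem (mem_union_right _ (mem_image_of_mem _ (mem_range.2 hk)))

lemma mk_mem_quowerCover_center : ((2 * n : ZMod (4 * n)), (0 : ZMod (4 * n))) ∈ quowerCover n :=
  mem_insert_self _ _

variable [NeZero n]

lemma exists_mem_quowerCover_fst_eq {p : ZMod (4 * n)} (hp : parity p = 1) :
    ∃ x ∈ quowerCover n, p = x.1 := by
  obtain ⟨a, ha, rfl⟩ := exists_natCast_eq p
  rw [map_natCast, ZMod.natCast_eq_one_iff_odd] at hp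
  obtain ⟨k, rfl⟩ := hp
  rcases lt_or_ge k n with hk | hk
  · exact ⟨_, mk_mem_quowerCover_left hk, by push_cast; ring⟩
  · obtain ⟨j, rfl⟩ := Nat.exists_eq_add_of_le hk
    exact ⟨_, mk_mem_quowerCover_right (k := j) (by omega), by push_cast; ring⟩

lemma exists_mem_quowerCover_snd_eq {q : ZMod (4 * n)} (hq : parity q = 1) :
    ∃ x ∈ quowerCover n, q = x.2 := by
  obtain ⟨b, hb, rfl⟩ := exists_natCast_eq q
  rw [map_natCast, ZMod.natCast_eq_one_iff_odd] at hq
  obtain ⟨j, rfl⟩ := hq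
  obtain ⟨k, rfl | rfl⟩ := Nat.even_or_odd' j
  · exact ⟨_, mk_mem_quowerCover_left (k := k) (by omega), by push_cast; ring⟩
  · exact ⟨_, mk_mem_quowerCover_right (k := k) (by omega), by push_cast; ring⟩

lemma exists_mem_quowerCover_sub_eq {d : ZMod (4 * n)} (hd : parity d = 0) :
    ∃ x ∈ quowerCover n, d = x.1 - x.2 := by
  obtain ⟨c, hc, rfl⟩ := exists_natCast_eq d
  rw [map_natCast, ZMod.natCast_eq_zero_iff_even] at hd
  obtain ⟨m, rfl⟩ := hd
  have h4n : (4 * n : ZMod (4 * n)) = 0 := by exact_mod_cast ZMod.natCast_self (4 * n)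
  rcases lt_trichotomy m n with hm | rfl | hm
  · obtain ⟨k, hk⟩ := Nat.exists_eq_add_of_lt hm
    have hk' := congrArg (Nat.cast : ℕ → ZMod (4 * n)) hk
    push_cast at hk'
    exact ⟨_, mk_mem_quowerCover_right (k := k) (by omega),
      by push_cast; linear_combination -2 * hk'⟩
  · exact ⟨_, mk_mem_quowerCover_center, by push_cast; ring⟩
  · obtain ⟨k, hk⟩ : ∃ k, m + k = 2 * n := ⟨2 * n - m, by omega⟩
    have hk' := congrArg (Nat.cast : ℕ → ZMod (4 * n)) hk
    push_cast at hk'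
    exact ⟨_, mk_mem_quowerCover_left (k := k) (by omega),
      by push_cast; linear_combination 2 * hk' + h4n⟩

lemma isQuowerCover_quowerCover :
    IsQuowerCover (quowerCover n : Set (ZMod (4 * n) × ZMod (4 * n))) := by
  intro p q
  have h01 : ∀ e : ZMod 2, e = 0 ∨ e = 1 := by decide
  rcases h01 (parity p) with hp | hp
  · rcases h01 (parity q) with hq | hq
    · obtain ⟨x, hx, h⟩ :=
        exists_mem_quowerCover_sub_eq (d := p - q) (by rw [map_sub, hp, hq, sub_zero])
      exact ⟨x, hx, Or.inr (Or.inr h)⟩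
    · obtain ⟨x, hx, h⟩ := exists_mem_quowerCover_snd_eq hq
      exact ⟨x, hx, Or.inr (Or.inl h)⟩
  · obtain ⟨x, hx, h⟩ := exists_mem_quowerCover_fst_eq hp
    exact ⟨x, hx, Or.inl h⟩

end UpperBound

theorem stmt_8 (n : ℕ) (hn : 0 < n) : xi (4 * n) = 2 * n + 1 := by
  have : NeZero n := ⟨hn.ne'⟩
  exact xi_eq isQuowerCover_quowerCover card_quowerCover_le fun _ => two_mul_add_one_le_card
end

section
/- For every positive integer n, the minimum number of quowers needed to cover 𝔻_{2n+1} := (Z/(2n+1)Z)² \ D(1,1) is at least n + 1; that is, ξ_D(2n+1) ≥ n + 1. -/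
lemma quower_cases {m : ℕ} {q x : ZMod m × ZMod m} (h : q ∈ quower m x) :
    q.1 = x.1 ∨ q.2 = x.2 ∨ q.2 - q.1 = x.2 - x.1 := by
  rcases h with (⟨t, rfl⟩ | ⟨t, rfl⟩) | ⟨t, rfl⟩
  · right; right; ring
  · right; left; rfl
  · left; rfl

lemma self_mem_quower {m : ℕ} (q : ZMod m × ZMod m) : q ∈ quower m q :=
  Or.inr ⟨q.2, rfl⟩

lemma notMem_diag {m : ℕ} {q : ZMod m × ZMod m} (h : q.1 ≠ q.2) :
    q ∉ diag m (1, 1) := by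
  rintro ⟨t, rfl⟩
  exact h rfl

open Finset in
lemma key (n : ℕ) (hn : 0 < n) (X : Set (ZMod (2 * n + 1) × ZMod (2 * n + 1)))
    (hcov : Set.univ \ diag (2 * n + 1) (1, 1) ⊆ ⋃ x ∈ X, quower (2 * n + 1) x) :
    n + 1 ≤ X.ncard := by
  haveI : NeZero (2 * n + 1) := ⟨by omega⟩
  by_contra hlt
  push_neg at hlt
  have hXn : X.ncard ≤ n := by omega
  classical
  have hF : X.Finite := Set.toFinite X
  set F : Finset (ZMod (2 * n + 1) × ZMod (2 * n + 1)) := hF.toFinset with hFdef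
  have hFcard : F.card ≤ n := by
    rw [hFdef, ← Set.ncard_eq_toFinset_card X hF]; exact hXn
  set C : Finset (ZMod (2 * n + 1)) := F.image Prod.fst with hCdef
  set R : Finset (ZMod (2 * n + 1)) := F.image Prod.snd with hRdef
  set Dt : Finset (ZMod (2 * n + 1)) := F.image (fun p => p.2 - p.1) with hDtdef
  have hC : C.card ≤ n := le_trans (card_image_le) hFcard
  have hR : R.card ≤ n := le_trans (card_image_le) hFcard
  have hDt : Dt.card ≤ n := le_trans (card_image_le) hFcard
  set E : Finset (ZMod (2 * n + 1)) := insert 0 Dt with hEdef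
  have hE : E.card ≤ n + 1 := le_trans (card_insert_le _ _) (by omega)
  have hcardZ : Fintype.card (ZMod (2 * n + 1)) = 2 * n + 1 := ZMod.card (2 * n + 1)
  set A : Finset (ZMod (2 * n + 1)) := Finset.univ \ C with hAdef
  have hA : n + 1 ≤ A.card := by
    rw [hAdef, card_sdiff_of_subset (subset_univ C), card_univ, hcardZ]; omega
  set S : Finset (ZMod (2 * n + 1)) := Finset.univ \ R with hSdef
  have hS : n + 1 ≤ S.card := by
    rw [hSdef, card_sdiff_of_subset (subset_univ R), card_univ, hcardZ]; omega
  have hSE : ∀ a ∈ A, S = E.image (· + a) := by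
    intro a ha
    have hsub : S ⊆ E.image (· + a) := by
      intro y hy
      have hyR : y ∉ R := (mem_sdiff.mp hy).2
      by_cases hya : y = a
      · exact mem_image.mpr ⟨0, mem_insert_self 0 Dt, by simp [hya]⟩
      · have haC : a ∉ C := (mem_sdiff.mp ha).2
        have hne : ((a, y) : ZMod (2 * n + 1) × ZMod (2 * n + 1)).1 ≠ ((a, y) : ZMod (2 * n + 1) × ZMod (2 * n + 1)).2 :=
          fun h => hya h.symm
        have hq : ((a, y) : ZMod (2 * n + 1) × ZMod (2 * n + 1)) ∈ Set.univ \ diag (2 * n + 1) (1, 1) :=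
          ⟨trivial, notMem_diag hne⟩
        obtain ⟨x, hxX, hxq⟩ := Set.mem_iUnion₂.mp (hcov hq)
        have hxF : x ∈ F := hF.mem_toFinset.mpr hxX
        rcases quower_cases hxq with h1 | h2 | h3
        · exact absurd (mem_image.mpr ⟨x, hxF, h1.symm⟩) haC
        · exact absurd (mem_image.mpr ⟨x, hxF, h2.symm⟩) hyR
        · refine mem_image.mpr ⟨x.2 - x.1, mem_insert_of_mem (mem_image.mpr ⟨x, hxF, rfl⟩), ?_⟩
          have : y - a = x.2 - x.1 := h3
          linear_combination -this
    have hcard : (E.image (· + a)).card ≤ S.card :=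
      le_trans (card_image_le) (le_trans hE hS)
    exact eq_of_subset_of_card_le hsub hcard
  have hSE' : ∀ a ∈ A, S = E.image (· + a) := hSE
  have htrans : ∀ d : ZMod (2 * n + 1), S.image (· + d) = S := by
    intro d
    have hex : ∃ a, a ∈ A ∧ a + d ∈ A := by
      set B : Finset (ZMod (2 * n + 1)) := A.image (· - d) with hBdef
      have hB : B.card = A.card :=
        card_image_of_injective _ (fun x y h => by
          have : x - d + d = y - d + d := by rw [h]
          simpa using this)
      have hint : (A ∩ B).Nonempty := by
        rw [← card_pos]
        have h1 : (A ∪ B).card ≤ 2 * n + 1 := by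
          calc (A ∪ B).card ≤ (Finset.univ : Finset (ZMod (2 * n + 1))).card :=
                card_le_card (subset_univ _)
            _ = 2 * n + 1 := by rw [card_univ, hcardZ]
        have h2 : (A ∪ B).card + (A ∩ B).card = A.card + B.card :=
          card_union_add_card_inter A B
        omega
      obtain ⟨a, haAB⟩ := hint
      have haA : a ∈ A := (mem_inter.mp haAB).1
      obtain ⟨a', ha', haa⟩ := mem_image.mp (mem_inter.mp haAB).2
      refine ⟨a, haA, ?_⟩
      have : a + d = a' := by rw [← haa]; ring
      rwa [this]
    obtain ⟨a, haA, hadA⟩ := hex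
    calc S.image (· + d) = (E.image (· + a)).image (· + d) := by rw [← hSE a haA]
      _ = E.image (· + (a + d)) := by
          rw [image_image]; apply image_congr; intro x _; simp [Function.comp, add_assoc]
      _ = S := (hSE _ hadA).symm
  have hS0 : S.Nonempty := card_pos.mp (by omega)
  obtain ⟨s0, hs0⟩ := hS0
  have huniv : S = Finset.univ := by
    apply eq_univ_iff_forall.mpr
    intro y
    have h := htrans (y - s0)
    rw [← h]
    exact mem_image.mpr ⟨s0, hs0, by ring⟩
  have hAne : A.Nonempty := card_pos.mp (by omega)
  obtain ⟨a0, ha0⟩ := hAne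
  have hSle : S.card ≤ n + 1 := by
    rw [hSE a0 ha0]
    exact le_trans card_image_le hE
  rw [huniv, card_univ, hcardZ] at hSle
  omega

theorem stmt_9 (n : ℕ) (hn : 0 < n) : n + 1 ≤ xiD (2 * n + 1) := by
  haveI : NeZero (2 * n + 1) := ⟨by omega⟩
  apply le_csInf
  · refine ⟨(Set.univ : Set (ZMod (2 * n + 1) × ZMod (2 * n + 1))).ncard, Set.univ, rfl, ?_⟩
    intro q _
    exact Set.mem_iUnion₂.mpr ⟨q, trivial, self_mem_quower q⟩
  · rintro k ⟨X, rfl, hcov⟩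
    exact key n hn X hcov
end

section
/- If n is odd, then ξ(n) ≤ ⌊(2n+1)/3⌋, i.e. there is a covering of the n×n toroidal board (Z/nZ)² by at most ⌊(2n+1)/3⌋ quowers. -/
theorem stmt_10 (n : ℕ) (hn : 0 < n) (ho : Odd n) : xi n ≤ (2 * n + 1) / 3 := by
  haveI : NeZero n := ⟨hn.ne'⟩
  set k := (2 * n + 1) / 3 with hk
  set m := n - k with hm
  have hkn : k ≤ n := by omega
  have hkm : 3 * k ≥ 2 * n - 1 := by omega
  set P : ℕ → ZMod n × ZMod n := fun i =>
    (((m + i : ℕ) : ZMod n),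
      if i < m then ((m + 2 * i : ℕ) : ZMod n)
      else if i ≤ 2 * m - 2 then ((2 * i + 1 - m : ℕ) : ZMod n)
      else ((m + i : ℕ) : ZMod n)) with hP
  have key : ∀ q : ZMod n × ZMod n, ∃ i < k, q ∈ quower n (P i) := by
    intro q
    have hx : q.1.val < n := ZMod.val_lt q.1
    have hy : q.2.val < n := ZMod.val_lt q.2
    have hq1 : ((q.1.val : ℕ) : ZMod n) = q.1 := by
      simp [ZMod.natCast_val, ZMod.cast_id]
    have hq2 : ((q.2.val : ℕ) : ZMod n) = q.2 := by
      simp [ZMod.natCast_val, ZMod.cast_id]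
    by_cases hxm : m ≤ q.1.val
    · -- covered by a vertical line
      refine ⟨q.1.val - m, by omega, Set.mem_union_right _ ⟨q.2, ?_⟩⟩
      have h1 : ((m + (q.1.val - m) : ℕ) : ZMod n) = q.1 := by
        rw [show m + (q.1.val - m) = q.1.val by omega, hq1]
      simp only [hP, h1]
    · push_neg at hxm
      have hm1 : 1 ≤ m := by omega
      by_cases hym : m ≤ q.2.val
      · -- covered by a horizontal line
        set j := q.2.val - m with hj
        by_cases hbig : 2 * m - 1 ≤ j
        · refine ⟨j, by omega, Set.mem_union_left _ (Set.mem_union_right _ ⟨q.1, ?_⟩)⟩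
          simp only [hP, if_neg (by omega : ¬ j < m), if_neg (by omega : ¬ j ≤ 2 * m - 2)]
          rw [show ((m + j : ℕ) : ZMod n) = q.2 by
            rw [show m + j = q.2.val by omega, hq2]]
        · rcases Nat.even_or_odd j with hpar | hpar
          · have hpar2 : j % 2 = 0 := Nat.even_iff.mp hpar
            refine ⟨j / 2, by omega, Set.mem_union_left _ (Set.mem_union_right _ ⟨q.1, ?_⟩)⟩
            simp only [hP, if_pos (by omega : j / 2 < m)]
            rw [show ((m + 2 * (j / 2) : ℕ) : ZMod n) = q.2 by
              rw [show m + 2 * (j / 2) = q.2.val by omega, hq2]]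
          · have hpar2 : j % 2 = 1 := Nat.odd_iff.mp hpar
            refine ⟨m + j / 2, by omega,
              Set.mem_union_left _ (Set.mem_union_right _ ⟨q.1, ?_⟩)⟩
            simp only [hP, if_neg (by omega : ¬ m + j / 2 < m),
              if_pos (by omega : m + j / 2 ≤ 2 * m - 2)]
            rw [show ((2 * (m + j / 2) + 1 - m : ℕ) : ZMod n) = q.2 by
              rw [show 2 * (m + j / 2) + 1 - m = q.2.val by omega, hq2]]
      · -- both coordinates below m: covered by a diagonal
        push_neg at hym
        by_cases hd : q.1.val ≤ q.2.val
        · set i := q.2.val - q.1.val with hi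
          refine ⟨i, by omega,
            Set.mem_union_left _ (Set.mem_union_left _
              ⟨q.1 - ((m + i : ℕ) : ZMod n), ?_⟩)⟩
          simp only [hP, if_pos (by omega : i < m)]
          have hnat : q.2.val + (m + i) = (m + 2 * i) + q.1.val := by omega
          have hcast : q.2 + ((m + i : ℕ) : ZMod n)
              = ((m + 2 * i : ℕ) : ZMod n) + q.1 := by
            rw [← hq1, ← hq2]
            exact_mod_cast congrArg (Nat.cast : ℕ → ZMod n) hnat
          refine Prod.ext ?_ ?_ <;> simp only
          · ring
          · linear_combination hcast
        · push_neg at hd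
          set d := q.1.val - q.2.val with hd2
          set i := 2 * m - 1 - d with hi
          refine ⟨i, by omega,
            Set.mem_union_left _ (Set.mem_union_left _
              ⟨q.1 - ((m + i : ℕ) : ZMod n), ?_⟩)⟩
          simp only [hP, if_neg (by omega : ¬ i < m), if_pos (by omega : i ≤ 2 * m - 2)]
          have hnat : q.2.val + (m + i) = (2 * i + 1 - m) + q.1.val := by omega
          have hcast : q.2 + ((m + i : ℕ) : ZMod n)
              = ((2 * i + 1 - m : ℕ) : ZMod n) + q.1 := by
            rw [← hq1, ← hq2]
            exact_mod_cast congrArg (Nat.cast : ℕ → ZMod n) hnat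
          refine Prod.ext ?_ ?_ <;> simp only
          · ring
          · linear_combination hcast
  set X : Set (ZMod n × ZMod n) := ↑((Finset.range k).image P) with hX
  have hcard : X.ncard ≤ k := by
    rw [hX, Set.ncard_coe_finset]
    exact (Finset.card_image_le).trans (by simp)
  have hcover : (⋃ x ∈ X, quower n x) = Set.univ := by
    apply Set.eq_univ_of_forall
    intro q
    obtain ⟨i, hi, hq⟩ := key q
    exact Set.mem_biUnion (by
      simp only [hX, Finset.coe_image, Finset.coe_range, Set.mem_image, Set.mem_Iio]
      exact ⟨i, hi, rfl⟩) hq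
  exact le_trans (Nat.sInf_le ⟨X, rfl, hcover⟩) hcard
end

section
/- For positive odd integers m and n, ξ(mn) ≤ m·ξ(n): if (Z/nZ)² can be covered by k quowers, then (Z/mnZ)² can be covered by mk quowers. -/
-- auxiliary lemmas

lemma two_mul_surj {m : ℕ} (hom : Odd m) (j : ZMod m) : ∃ i : ZMod m, 2 * i = j := by
  obtain ⟨k, hk⟩ := hom
  refine ⟨((k + 1 : ℕ) : ZMod m) * j, ?_⟩
  have h1 : ((2 * (k + 1) : ℕ) : ZMod m) = ((m + 1 : ℕ) : ZMod m) := by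
    congr 1; omega
  have h2 : ((m + 1 : ℕ) : ZMod m) = 1 := by
    push_cast [ZMod.natCast_self]; ring
  calc 2 * (((k + 1 : ℕ) : ZMod m) * j) = ((2 * (k + 1) : ℕ) : ZMod m) * j := by
        push_cast; ring
    _ = j := by rw [h1, h2, one_mul]

/-- casting `n * (t % m)` into `ZMod (m*n)` is the same as casting `n * t`. -/
lemma cast_mod_aux (m n : ℕ) (t : ℕ) :
    ((n * (t % m) : ℕ) : ZMod (m * n)) = ((n * t : ℕ) : ZMod (m * n)) := by
  have ht : m * (t / m) + t % m = t := Nat.div_add_mod t m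
  have h0 : ((m * n : ℕ) : ZMod (m * n)) = 0 := ZMod.natCast_self _
  calc ((n * (t % m) : ℕ) : ZMod (m * n))
      = ((n * (m * (t / m) + t % m) : ℕ) : ZMod (m * n))
        - ((m * n : ℕ) : ZMod (m * n)) * (t / m : ℕ) := by push_cast; ring
    _ = ((n * t : ℕ) : ZMod (m * n)) := by rw [ht, h0]; ring

/-- additivity of j ↦ n * j.val ∈ ZMod (m*n) -/
lemma nu_add (m n : ℕ) [NeZero m] (i j : ZMod m) :
    ((n * (i + j).val : ℕ) : ZMod (m * n))
      = ((n * i.val : ℕ) : ZMod (m * n)) + ((n * j.val : ℕ) : ZMod (m * n)) := by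
  rw [ZMod.val_add, cast_mod_aux, ← Nat.cast_add, ← Nat.mul_add]

/-- elements of ZMod (m*n) killed by reduction mod n are of the form n * j.val -/
lemma mem_ker (m n : ℕ) [NeZero m] [NeZero n] (c : ZMod (m * n))
    (h : ((c.val : ℕ) : ZMod n) = 0) :
    ∃ j : ZMod m, c = ((n * j.val : ℕ) : ZMod (m * n)) := by
  obtain ⟨t, ht⟩ := (ZMod.natCast_eq_zero_iff _ _).1 h
  refine ⟨(t : ZMod m), ?_⟩
  rw [ZMod.val_natCast, cast_mod_aux, ← ht]
  exact (ZMod.natCast_zmod_val c).symm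

theorem stmt_11 (m n : ℕ) (hm : 0 < m) (hn : 0 < n) (hom : Odd m) (hon : Odd n) : xi (m * n) ≤ m * xi n := by
  haveI : NeZero m := ⟨hm.ne'⟩
  haveI : NeZero n := ⟨hn.ne'⟩
  haveI : NeZero (m * n) := ⟨(Nat.mul_pos hm hn).ne'⟩
  -- get an optimal cover of (ZMod n)²
  have hne : {k | ∃ X : Set (ZMod n × ZMod n), X.ncard = k ∧
      (⋃ x ∈ X, quower n x) = Set.univ}.Nonempty := by
    refine ⟨(Set.univ : Set (ZMod n × ZMod n)).ncard, Set.univ, rfl, ?_⟩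
    ext p
    simp only [Set.mem_iUnion, Set.mem_univ, iff_true, exists_prop]
    exact ⟨p, trivial, Or.inl (Or.inr ⟨p.1, rfl⟩)⟩
  obtain ⟨X, hXcard, hXcov⟩ := Nat.sInf_mem hne
  -- the reduction map
  set r : ZMod (m * n) →+* ZMod n := ZMod.castHom ⟨m, mul_comm m n⟩ (ZMod n) with hr
  have hrval : ∀ c : ZMod (m * n), r c = ((c.val : ℕ) : ZMod n) := by
    intro c
    rw [ZMod.castHom_apply, ← ZMod.natCast_val]
  have hrnat : ∀ x : ZMod n, r ((x.val : ℕ) : ZMod (m * n)) = x := by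
    intro x
    rw [map_natCast, ZMod.natCast_zmod_val]
  have hker : ∀ c : ZMod (m * n), r c = 0 →
      ∃ j : ZMod m, c = ((n * j.val : ℕ) : ZMod (m * n)) := by
    intro c hc
    exact mem_ker m n c (by rwa [hrval] at hc)
  -- the lifted family of quower centers
  set f : (ZMod n × ZMod n) × ZMod m → ZMod (m * n) × ZMod (m * n) :=
    fun q => (((q.1.1.val : ℕ) : ZMod (m * n)) + ((n * q.2.val : ℕ) : ZMod (m * n)),
              ((q.1.2.val : ℕ) : ZMod (m * n)) + ((n * (2 * q.2).val : ℕ) : ZMod (m * n)))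
    with hf
  set Y : Set (ZMod (m * n) × ZMod (m * n)) := f '' (X ×ˢ (Set.univ : Set (ZMod m))) with hY
  have hcov : (⋃ y ∈ Y, quower (m * n) y) = Set.univ := by
    ext ab
    simp only [Set.mem_iUnion, Set.mem_univ, iff_true, exists_prop]
    obtain ⟨a, b⟩ := ab
    have hmem : (r a, r b) ∈ ⋃ x ∈ X, quower n x := hXcov ▸ Set.mem_univ _
    simp only [Set.mem_iUnion, exists_prop] at hmem
    obtain ⟨x, hxX, hx⟩ := hmem
    rcases hx with (hd | hh) | hv
    · -- diagonal case
      obtain ⟨t, htt⟩ := hd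
      have hra : r a = x.1 + t := congrArg Prod.fst htt
      have hrb : r b = x.2 + t := congrArg Prod.snd htt
      have hc : r ((b - a) - (((x.2.val : ℕ) : ZMod (m * n)) - ((x.1.val : ℕ) : ZMod (m * n)))) = 0 := by
        simp only [map_sub, hrnat, hra, hrb]; ring
      obtain ⟨j, hj⟩ := hker _ hc
      refine ⟨f (x, j), ⟨(x, j), ⟨hxX, trivial⟩, rfl⟩, Or.inl (Or.inl ?_)⟩
      refine ⟨a - (f (x, j)).1, ?_⟩
      have hdiff : (f (x, j)).2 - (f (x, j)).1 = b - a := by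
        have h2j : ((n * (2 * j).val : ℕ) : ZMod (m * n))
            = ((n * j.val : ℕ) : ZMod (m * n)) + ((n * j.val : ℕ) : ZMod (m * n)) := by
          rw [two_mul j, nu_add]
        simp only [hf, h2j]
        have := hj
        linear_combination -this
      have h1 : a = (f (x, j)).1 + (a - (f (x, j)).1) := by ring
      have h2 : b = (f (x, j)).2 + (a - (f (x, j)).1) := by linear_combination -hdiff
      exact Prod.ext h1 h2
    · -- horizontal case
      obtain ⟨t, htt⟩ := hh
      have hrb : r b = x.2 := congrArg Prod.snd htt
      have hc : r (b - ((x.2.val : ℕ) : ZMod (m * n))) = 0 := by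
        simp only [map_sub, hrnat, hrb]; ring
      obtain ⟨j', hj'⟩ := hker _ hc
      obtain ⟨j, hjj⟩ := two_mul_surj hom j'
      refine ⟨f (x, j), ⟨(x, j), ⟨hxX, trivial⟩, rfl⟩, Or.inl (Or.inr ?_)⟩
      refine ⟨a, ?_⟩
      have : (f (x, j)).2 = b := by
        simp only [hf, hjj]
        linear_combination -hj'
      exact Prod.ext rfl this.symm
    · -- vertical case
      obtain ⟨t, htt⟩ := hv
      have hra : r a = x.1 := congrArg Prod.fst htt
      have hc : r (a - ((x.1.val : ℕ) : ZMod (m * n))) = 0 := by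
        simp only [map_sub, hrnat, hra]; ring
      obtain ⟨j, hj⟩ := hker _ hc
      refine ⟨f (x, j), ⟨(x, j), ⟨hxX, trivial⟩, rfl⟩, Or.inr ?_⟩
      refine ⟨b, ?_⟩
      have : (f (x, j)).1 = a := by
        simp only [hf]
        linear_combination -hj
      exact Prod.ext this.symm rfl
  have h1 : xi (m * n) ≤ Y.ncard := Nat.sInf_le ⟨Y, rfl, hcov⟩
  have h2 : Y.ncard ≤ m * xi n := by
    have hfin : (X ×ˢ (Set.univ : Set (ZMod m))).Finite := Set.toFinite _
    calc Y.ncard ≤ (X ×ˢ (Set.univ : Set (ZMod m))).ncard := Set.ncard_image_le hfin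
      _ = X.ncard * m := by
          rw [← Nat.card_coe_set_eq, Nat.card_congr (Equiv.Set.prod _ _),
            Nat.card_prod, Nat.card_coe_set_eq, Nat.card_coe_set_eq,
            Set.ncard_univ, Nat.card_zmod]
      _ = m * xi n := by rw [hXcard, mul_comm, xi]
  exact h1.trans h2
end

section
/- Let q be a prime power and v a nonzero vector in F_q³. Then the radius-1 extended ball centered at the line [v] spanned by v equals the union of all 1-dimensional subspaces lying in the projective lines joining [v] to each of the three cardinal points (1:0:0), (0:1:0), (0:0:1); i.e. B_E[v,1] = ⋃ { W : W a point of PG(2,q) on ⟨[v],c₁⟩ ∪ ⟨[v],c₂⟩ ∪ ⟨[v],c₃⟩ }, viewing each projective point as a subset of F_q³. -/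
open Projectivization Classical

variable (F : Type*) [Field F] [Fintype F] [DecidableEq F]

noncomputable def cardPt (i : Fin 3) : Projectivization F (Fin 3 → F) :=
  Projectivization.mk F (Pi.single i 1) (by intro h; simpa using congrFun h i)

noncomputable def pline (u v : Projectivization F (Fin 3 → F)) :
    Set (Projectivization F (Fin 3 → F)) :=
  if u = v then {u}
  else {p | p.submodule ≤ u.submodule ⊔ v.submodule}

noncomputable def windRose (p : Projectivization F (Fin 3 → F)) :
    Set (Projectivization F (Fin 3 → F)) :=
  pline F p (cardPt F 0) ∪ pline F p (cardPt F 1) ∪ pline F p (cardPt F 2)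

noncomputable def nnz (p : Projectivization F (Fin 3 → F)) : ℕ :=
  (Finset.univ.filter fun i : Fin 3 => p.rep i ≠ 0).card

def IsCardinal (p : Projectivization F (Fin 3 → F)) : Prop := nnz F p = 1
def IsCoast (p : Projectivization F (Fin 3 → F)) : Prop := nnz F p = 2
def IsMidland (p : Projectivization F (Fin 3 → F)) : Prop := nnz F p = 3

def extBall (v : Fin 3 → F) : Set (Fin 3 → F) :=
  {w | ∃ u ∈ Submodule.span F ({v} : Set (Fin 3 → F)), hammingDist w u ≤ 1}

section Aux
variable {F}

lemma ham_le_one_of (w u : Fin 3 → F) (i : Fin 3) (t : F)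
    (h : w = u + t • (Pi.single i 1 : Fin 3 → F)) : hammingDist w u ≤ 1 := by
  have hsub : (Finset.univ.filter fun j => w j ≠ u j) ⊆ {i} := by
    intro j hj
    simp only [Finset.mem_filter, Finset.mem_univ, true_and] at hj
    simp only [Finset.mem_singleton]
    by_contra hji
    apply hj
    rw [h]
    simp [Pi.single_apply, hji]
  calc hammingDist w u = (Finset.univ.filter fun j => w j ≠ u j).card := rfl
    _ ≤ ({i} : Finset (Fin 3)).card := Finset.card_le_card hsub
    _ = 1 := Finset.card_singleton i

lemma exists_of_ham_le_one (w u : Fin 3 → F) (h : hammingDist w u ≤ 1) :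
    ∃ (i : Fin 3) (t : F), w = u + t • (Pi.single i 1 : Fin 3 → F) := by
  have hs : (Finset.univ.filter fun j => w j ≠ u j).card ≤ 1 := h
  rw [Finset.card_le_one] at hs
  by_cases hne : ∃ i, w i ≠ u i
  · obtain ⟨i, hi⟩ := hne
    refine ⟨i, w i - u i, funext fun j => ?_⟩
    by_cases hji : j = i
    · subst hji; simp
    · have hwj : w j = u j := by
        by_contra hwj
        exact hji (hs j (by simp [hwj]) i (by simp [hi]))
      simp [hwj, Pi.single_apply, hji]
  · push_neg at hne
    exact ⟨0, 0, by funext j; simp [hne j]⟩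

lemma self_mem_windRose (p : Projectivization F (Fin 3 → F)) :
    p ∈ windRose F p := by
  left; left
  unfold pline
  by_cases h : p = cardPt F 0
  · rw [if_pos h]; exact rfl
  · rw [if_neg h]; exact (le_sup_left : p.submodule ≤ _)

lemma submodule_cardPt (i : Fin 3) :
    (cardPt F i).submodule = Submodule.span F {(Pi.single i 1 : Fin 3 → F)} :=
  Projectivization.submodule_mk _ _

end Aux

theorem stmt_13 (F : Type*) [Field F] [Fintype F] [DecidableEq F]
    (v : Fin 3 → F) (hv : v ≠ 0) :
    extBall F v =
      ⋃ p ∈ windRose F (Projectivization.mk F v hv),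
        (Projectivization.submodule p : Set (Fin 3 → F)) := by
  have hsubv : (Projectivization.mk F v hv).submodule = Submodule.span F {v} :=
    Projectivization.submodule_mk _ _
  ext w
  simp only [Set.mem_iUnion, exists_prop]
  constructor
  · rintro ⟨u, hu, hd⟩
    rw [Submodule.mem_span_singleton] at hu
    obtain ⟨c, rfl⟩ := hu
    obtain ⟨i, t, hw⟩ := exists_of_ham_le_one w (c • v) hd
    by_cases hmk : Projectivization.mk F v hv = cardPt F i
    · -- single i 1 spans the same line as v
      have h1 : (Pi.single i 1 : Fin 3 → F) ∈ Submodule.span F {v} := by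
        rw [← hsubv, hmk, submodule_cardPt]
        exact Submodule.mem_span_singleton_self _
      refine ⟨Projectivization.mk F v hv, self_mem_windRose _, ?_⟩
      rw [SetLike.mem_coe, hsubv, hw]
      exact Submodule.add_mem _ (Submodule.smul_mem _ c
        (Submodule.mem_span_singleton_self v)) (Submodule.smul_mem _ t h1)
    · by_cases hw0 : w = 0
      · exact ⟨Projectivization.mk F v hv, self_mem_windRose _, by
          rw [SetLike.mem_coe, hw0]; exact Submodule.zero_mem _⟩
      · refine ⟨Projectivization.mk F w hw0, ?_, by
          rw [SetLike.mem_coe, Projectivization.submodule_mk]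
          exact Submodule.mem_span_singleton_self w⟩
        have hmem : Projectivization.mk F w hw0 ∈
            pline F (Projectivization.mk F v hv) (cardPt F i) := by
          unfold pline
          rw [if_neg hmk]
          show (Projectivization.mk F w hw0).submodule ≤ _
          rw [Projectivization.submodule_mk, hsubv, submodule_cardPt,
            Submodule.span_singleton_le_iff_mem, Submodule.mem_sup]
          exact ⟨c • v, Submodule.smul_mem _ c (Submodule.mem_span_singleton_self v),
            t • (Pi.single i 1 : Fin 3 → F), Submodule.smul_mem _ t
              (Submodule.mem_span_singleton_self _), hw.symm⟩
        fin_cases i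
        · exact Or.inl (Or.inl hmem)
        · exact Or.inl (Or.inr hmem)
        · exact Or.inr hmem
  · rintro ⟨p, hp, hwp⟩
    rw [SetLike.mem_coe] at hwp
    have key : ∀ i : Fin 3,
        p ∈ pline F (Projectivization.mk F v hv) (cardPt F i) → w ∈ extBall F v := by
      intro i hpi
      unfold pline at hpi
      by_cases hmk : Projectivization.mk F v hv = cardPt F i
      · rw [if_pos hmk] at hpi
        rcases hpi with rfl
        rw [hsubv] at hwp
        exact ⟨w, hwp, by simp [hammingDist_self]⟩
      · rw [if_neg hmk] at hpi
        have : w ∈ (Projectivization.mk F v hv).submodule ⊔ (cardPt F i).submodule :=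
          hpi hwp
        rw [hsubv, submodule_cardPt, Submodule.mem_sup] at this
        obtain ⟨y, hy, z, hz, hyz⟩ := this
        rw [Submodule.mem_span_singleton] at hz
        obtain ⟨t, rfl⟩ := hz
        exact ⟨y, hy, ham_le_one_of w y i t (by rw [← hyz])⟩
    rcases hp with (h | h) | h
    · exact key 0 h
    · exact key 1 h
    · exact key 2 h
end

section
/- Let q be a prime power, let p₁,…,pₙ be points of PG(2,q), and for each i let vᵢ be a nonzero vector spanning pᵢ. Then the wind roses W(p₁),…,W(pₙ) cover all points of PG(2,q) if and only if the extended balls B_E[v₁,1],…,B_E[vₙ,1] cover F_q³. -/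
open Projectivization Classical

variable (F : Type*) [Field F] [Fintype F] [DecidableEq F]

lemma le_submodule_eq {q r : Projectivization F (Fin 3 → F)}
    (h : q.submodule ≤ r.submodule) : q = r := by
  rw [Projectivization.submodule_eq, Projectivization.submodule_eq] at h
  have hq : q.rep ∈ Submodule.span F {r.rep} :=
    h (Submodule.mem_span_singleton_self _)
  rw [Submodule.mem_span_singleton] at hq
  obtain ⟨c, hc⟩ := hq
  rw [← q.mk_rep, ← r.mk_rep, Projectivization.mk_eq_mk_iff']
  exact ⟨c, hc⟩

lemma mem_pline_iff (P q : Projectivization F (Fin 3 → F)) (j : Fin 3) :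
    q ∈ pline F P (cardPt F j) ↔ q.submodule ≤ P.submodule ⊔ (cardPt F j).submodule := by
  unfold pline
  split_ifs with h
  · subst h
    simp only [sup_idem, Set.mem_singleton_iff]
    constructor
    · rintro rfl; exact le_rfl
    · exact le_submodule_eq F
  · rfl

lemma mem_windRose_iff (P q : Projectivization F (Fin 3 → F)) :
    q ∈ windRose F P ↔ ∃ j : Fin 3, q.submodule ≤ P.submodule ⊔ (cardPt F j).submodule := by
  unfold windRose
  simp only [Set.mem_union, mem_pline_iff]
  constructor
  · rintro ((h | h) | h)
    exacts [⟨0, h⟩, ⟨1, h⟩, ⟨2, h⟩]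
  · rintro ⟨j, h⟩
    fin_cases j
    exacts [Or.inl (Or.inl h), Or.inl (Or.inr h), Or.inr h]

lemma mem_extBall_iff (v : Fin 3 → F) (w : Fin 3 → F) :
    w ∈ extBall F v ↔ ∃ j : Fin 3,
      w ∈ Submodule.span F ({v} : Set (Fin 3 → F)) ⊔
        Submodule.span F ({Pi.single j 1} : Set (Fin 3 → F)) := by
  constructor
  · rintro ⟨u, hu, hd⟩
    have hd' : ({i | w i ≠ u i} : Finset (Fin 3)).card ≤ 1 := hd
    rw [Finset.card_le_one] at hd'
    have key : ∃ j : Fin 3, ∀ k, k ≠ j → w k = u k := by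
      by_cases hne : (({i | w i ≠ u i} : Finset (Fin 3))).Nonempty
      · obtain ⟨j, hj⟩ := hne
        refine ⟨j, fun k hk => ?_⟩
        by_contra hwk
        exact hk (hd' k (by simpa using hwk) j hj)
      · refine ⟨0, fun k _ => ?_⟩
        by_contra hwk
        exact hne ⟨k, by simpa using hwk⟩
    obtain ⟨j, hj⟩ := key
    refine ⟨j, Submodule.mem_sup.2 ⟨u, hu, (w j - u j) • (Pi.single j 1 : Fin 3 → F), ?_, ?_⟩⟩
    · exact Submodule.smul_mem _ _ (Submodule.mem_span_singleton_self _)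
    · funext k
      by_cases hk : k = j
      · subst hk; simp
      · simp [Pi.single_apply, hk, hj k hk]
  · rintro ⟨j, hw⟩
    obtain ⟨u, hu, d, hd, rfl⟩ := Submodule.mem_sup.1 hw
    rw [Submodule.mem_span_singleton] at hd
    obtain ⟨c, rfl⟩ := hd
    set e : Fin 3 → F := Pi.single j 1 with he
    refine ⟨u, hu, ?_⟩
    have : ({i | (u + c • e) i ≠ u i} : Finset (Fin 3)) ⊆ {j} := by
      intro k hk
      simp only [Finset.mem_filter, Finset.mem_univ, true_and] at hk
      simp only [Finset.mem_singleton]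
      by_contra hkj
      exact hk (by simp [he, Pi.single_apply, hkj])
    calc hammingDist (u + c • e) u
        = ({i | (u + c • e) i ≠ u i} : Finset (Fin 3)).card := rfl
      _ ≤ ({j} : Finset (Fin 3)).card := Finset.card_le_card this
      _ = 1 := Finset.card_singleton j

theorem stmt_14 (F : Type*) [Field F] [Fintype F] [DecidableEq F]
    (N : ℕ) (p : Fin N → Projectivization F (Fin 3 → F))
    (v : Fin N → (Fin 3 → F)) (hv : ∀ i, v i ≠ 0)
    (hpv : ∀ i, Projectivization.mk F (v i) (hv i) = p i) :
    (⋃ i, windRose F (p i)) = Set.univ ↔ (⋃ i, extBall F (v i)) = Set.univ := by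
  have hsub : ∀ i, (p i).submodule = Submodule.span F ({v i} : Set (Fin 3 → F)) := by
    intro i
    rw [← hpv i, Projectivization.submodule_mk]
  have hcard : ∀ j : Fin 3, (cardPt F j).submodule
      = Submodule.span F ({(Pi.single j 1 : Fin 3 → F)} : Set (Fin 3 → F)) := by
    intro j
    rw [cardPt, Projectivization.submodule_mk]
  constructor
  · intro h
    rw [Set.eq_univ_iff_forall]
    intro w
    -- get some index i₀
    have hq : ∃ q : Projectivization F (Fin 3 → F), True :=
      ⟨Projectivization.mk F (Pi.single 0 1) (by intro h; simpa using congrFun h 0), trivial⟩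
    obtain ⟨q0, -⟩ := hq
    have := (Set.eq_univ_iff_forall.1 h) q0
    obtain ⟨i0, hi0⟩ := Set.mem_iUnion.1 this
    by_cases hw : w = 0
    · subst hw
      exact Set.mem_iUnion.2 ⟨i0, 0, Submodule.zero_mem _, by simp⟩
    · have hmem := (Set.eq_univ_iff_forall.1 h) (Projectivization.mk F w hw)
      obtain ⟨i, hi⟩ := Set.mem_iUnion.1 hmem
      obtain ⟨j, hj⟩ := (mem_windRose_iff F _ _).1 hi
      rw [Projectivization.submodule_mk, hsub, hcard] at hj
      refine Set.mem_iUnion.2 ⟨i, (mem_extBall_iff F _ _).2 ⟨j, ?_⟩⟩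
      exact hj (Submodule.mem_span_singleton_self w)
  · intro h
    rw [Set.eq_univ_iff_forall]
    intro q
    have hmem := (Set.eq_univ_iff_forall.1 h) q.rep
    obtain ⟨i, hi⟩ := Set.mem_iUnion.1 hmem
    obtain ⟨j, hj⟩ := (mem_extBall_iff F _ _).1 hi
    refine Set.mem_iUnion.2 ⟨i, (mem_windRose_iff F _ _).2 ⟨j, ?_⟩⟩
    rw [hsub, hcard, Projectivization.submodule_eq]
    rw [Submodule.span_singleton_le_iff_mem]
    exact hj
end

section
/- In PG(2,q), every midland wind rose is the union of three distinct midland lines; every coast wind rose is the union of a coast line and a midland line; and every cardinal wind rose is the union of two distinct coast lines. -/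
open Projectivization Classical

variable (F : Type*) [Field F] [Fintype F] [DecidableEq F]

def IsLine (F : Type*) [Field F] [Fintype F] [DecidableEq F]
    (L : Set (Projectivization F (Fin 3 → F))) : Prop :=
  ∃ u v : Projectivization F (Fin 3 → F), u ≠ v ∧ L = pline F u v

def IsMidlandLine (F : Type*) [Field F] [Fintype F] [DecidableEq F]
    (L : Set (Projectivization F (Fin 3 → F))) : Prop :=
  IsLine F L ∧ ∃ p ∈ L, IsMidland F p

def IsCoastLine (F : Type*) [Field F] [Fintype F] [DecidableEq F]
    (L : Set (Projectivization F (Fin 3 → F))) : Prop :=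
  IsLine F L ∧ ¬ ∃ p ∈ L, IsMidland F p

/-!
If `p ≠ u` lies on the line `⟨u, v⟩` then `⟨p, u⟩ = ⟨u, v⟩` (exchange of atoms in the modular
lattice of subspaces), and the points of `⟨cᵢ, cⱼ⟩` are those whose third coordinate vanishes.
So for a midland `p` the three lines `⟨p, cᵢ⟩` are distinct, since two of them coinciding would
put `p` on a coordinate line; for a coast `p` with `pₖ = 0` the lines `⟨p, cᵢ⟩` and `⟨p, cⱼ⟩`
both equal the coast line `⟨cᵢ, cⱼ⟩`, while `⟨p, cₖ⟩` contains the midland point `p + cₖ`; and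
for `p = cᵢ` the wind rose is `⟨cᵢ, cⱼ⟩ ∪ ⟨cᵢ, cₖ⟩`, two coordinate lines told apart by `cⱼ`.
-/

open scoped LinearAlgebra.Projectivization

theorem IsAtom.sup_eq_sup_of_le_sup {α : Type*} [Lattice α] [OrderBot α]
    [IsUpperModularLattice α] {a b c : α} (ha : IsAtom a) (hb : IsAtom b) (hc : IsAtom c)
    (hca : c ≠ a) (hle : c ≤ a ⊔ b) : a ⊔ c = a ⊔ b := by
  have hca' : ¬ c ≤ a := fun h => hca ((ha.le_iff_eq hc.ne_bot).mp h)
  have hab : a ≠ b := by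
    rintro rfl
    exact hca' (by simpa using hle)
  have hcov : a ⋖ a ⊔ b := covBy_sup_of_inf_covBy_right <| by
    rw [(ha.disjoint_of_ne hb hab).eq_bot]
    exact hb.bot_covBy
  refine (hcov.eq_or_eq le_sup_left (sup_le le_sup_left hle)).resolve_left fun h => ?_
  exact hca' (sup_eq_left.mp h)

theorem Projectivization.isAtom_submodule {K V : Type*} [DivisionRing K] [AddCommGroup V]
    [Module K V] (p : ℙ K V) : IsAtom p.submodule :=
  Submodule.isAtom_iff_finrank_eq_one.mpr p.finrank_submodule

theorem Projectivization.rep_mk_eq_zero_iff {K ι : Type*} [DivisionRing K] {v : ι → K}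
    (hv : v ≠ 0) (i : ι) : (mk K v hv).rep i = 0 ↔ v i = 0 := by
  obtain ⟨a, ha⟩ := exists_smul_eq_mk_rep K v hv
  simp [← ha, Units.smul_def]

section HammingNorm

variable {ι α : Type*} [Fintype ι] [Zero α] [DecidableEq α]

theorem hammingNorm_eq_card_iff {v : ι → α} :
    hammingNorm v = Fintype.card ι ↔ ∀ i, v i ≠ 0 := by
  rw [hammingNorm, ← Finset.card_univ, Finset.card_filter_eq_iff]
  simp

theorem exists_eq_zero_of_hammingNorm_add_one_eq_card {v : ι → α}
    (h : hammingNorm v + 1 = Fintype.card ι) : ∃ k, v k = 0 ∧ ∀ i ≠ k, v i ≠ 0 := by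
  have hzero : (Finset.univ.filter fun i => v i = 0).card = 1 := by
    have := Finset.card_filter_add_card_filter_not (s := Finset.univ) (fun i => v i ≠ 0)
    simp only [not_not, Finset.card_univ] at this
    rw [hammingNorm] at h
    omega
  obtain ⟨k, hk⟩ := Finset.card_eq_one.mp hzero
  have hmem : ∀ i, v i = 0 ↔ i = k := fun i => by
    simpa using Finset.ext_iff.mp hk i
  exact ⟨k, (hmem k).mpr rfl, fun i hi => (hmem i).not.mpr hi⟩

theorem exists_eq_single_of_hammingNorm_eq_one [DecidableEq ι] {v : ι → α}
    (h : hammingNorm v = 1) : ∃ i, v = Pi.single i (v i) := by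
  obtain ⟨i, hi⟩ := Finset.card_eq_one.mp h
  refine ⟨i, funext fun j => ?_⟩
  rcases eq_or_ne j i with rfl | hji
  · simp
  · have : j ∉ ({i} : Finset ι) := by simpa using hji
    rw [← hi] at this
    simpa [Pi.single_eq_of_ne hji] using this

theorem hammingNorm_single [DecidableEq ι] (i : ι) {a : α} (ha : a ≠ 0) :
    hammingNorm (Pi.single i a : ι → α) = 1 := by
  rw [hammingNorm, Finset.card_eq_one]
  exact ⟨i, by ext j; rcases eq_or_ne j i with rfl | hji <;> simp [*]⟩

end HammingNorm

theorem Fin3.exists_ne_ne {i j : Fin 3} (hij : i ≠ j) : ∃ k, k ≠ i ∧ k ≠ j := by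
  revert i j; decide

theorem Fin3.exists_pair_ne (k : Fin 3) : ∃ i j : Fin 3, i ≠ j ∧ i ≠ k ∧ j ≠ k := by
  revert k; decide

theorem Fin3.eq_or_eq_or_eq {i j k : Fin 3} (hij : i ≠ j) (hik : i ≠ k) (hjk : j ≠ k)
    (m : Fin 3) : m = i ∨ m = j ∨ m = k := by
  revert i j k m; decide

section WindRose

variable {K : Type*} [Field K]

theorem pline_self (u : ℙ K (Fin 3 → K)) : pline K u u = {u} := if_pos rfl

theorem pline_of_ne {u v : ℙ K (Fin 3 → K)} (huv : u ≠ v) :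
    pline K u v = {p | p.submodule ≤ u.submodule ⊔ v.submodule} := if_neg huv

theorem pline_comm (u v : ℙ K (Fin 3 → K)) : pline K u v = pline K v u := by
  rcases eq_or_ne u v with rfl | huv
  · rfl
  · rw [pline_of_ne huv, pline_of_ne huv.symm, sup_comm]

theorem left_mem_pline (u v : ℙ K (Fin 3 → K)) : u ∈ pline K u v := by
  rcases eq_or_ne u v with rfl | huv
  · simp [pline_self]
  · rw [pline_of_ne huv]
    exact (le_sup_left : u.submodule ≤ _)

theorem right_mem_pline (u v : ℙ K (Fin 3 → K)) : v ∈ pline K u v :=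
  pline_comm v u ▸ left_mem_pline v u

theorem pline_eq_of_mem {p u v : ℙ K (Fin 3 → K)} (hp : p ∈ pline K u v) (hpu : p ≠ u) :
    pline K p u = pline K u v := by
  rcases eq_or_ne u v with rfl | huv
  · rw [pline_self] at hp
    exact absurd hp hpu
  rw [pline_of_ne huv] at hp ⊢
  rw [pline_of_ne hpu, sup_comm, IsAtom.sup_eq_sup_of_le_sup u.isAtom_submodule
    v.isAtom_submodule p.isAtom_submodule (submodule_injective.ne hpu) hp]

theorem cardPt_rep_eq_zero_iff (i k : Fin 3) : (cardPt K i).rep k = 0 ↔ k ≠ i := by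
  rw [cardPt, rep_mk_eq_zero_iff]
  simp [Pi.single_apply]

theorem cardPt_injective : Function.Injective (cardPt K) := by
  intro i j h
  by_contra hij
  have hj := (cardPt_rep_eq_zero_iff (K := K) i j).mpr (Ne.symm hij)
  rw [h] at hj
  exact (cardPt_rep_eq_zero_iff j j).mp hj rfl

theorem mem_pline_cardPt_iff {i j k : Fin 3} (hij : i ≠ j) (hik : i ≠ k) (hjk : j ≠ k)
    (q : ℙ K (Fin 3 → K)) : q ∈ pline K (cardPt K i) (cardPt K j) ↔ q.rep k = 0 := by
  rw [pline_of_ne (cardPt_injective.ne hij), Set.mem_ofPred_eq, submodule_eq, cardPt, cardPt,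
    submodule_mk, submodule_mk, ← Submodule.span_insert,
    Submodule.span_singleton_le_iff_mem, Submodule.mem_span_pair]
  constructor
  · rintro ⟨a, b, h⟩
    simp [← h, hik.symm, hjk.symm]
  · refine fun hk => ⟨q.rep i, q.rep j, funext fun m => ?_⟩
    rcases Fin3.eq_or_eq_or_eq hij hik hjk m with rfl | rfl | rfl <;>
      simp [hij, hij.symm, hik.symm, hjk.symm, hk]

theorem pline_cardPt_subset_windRose (p : ℙ K (Fin 3 → K)) (m : Fin 3) :
    pline K p (cardPt K m) ⊆ windRose K p := by
  fin_cases m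
  exacts [fun _ hq => Or.inl (Or.inl hq), fun _ hq => Or.inl (Or.inr hq), fun _ hq => Or.inr hq]

theorem windRose_eq_union {i j k : Fin 3} (hij : i ≠ j) (hik : i ≠ k) (hjk : j ≠ k)
    (p : ℙ K (Fin 3 → K)) :
    windRose K p = pline K p (cardPt K i) ∪ pline K p (cardPt K j) ∪ pline K p (cardPt K k) := by
  have hsub (m : Fin 3) : pline K p (cardPt K m) ⊆
      pline K p (cardPt K i) ∪ pline K p (cardPt K j) ∪ pline K p (cardPt K k) := by
    rcases Fin3.eq_or_eq_or_eq hij hik hjk m with rfl | rfl | rfl <;> intro q hq <;> simp [hq]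
  refine Set.Subset.antisymm (Set.union_subset (Set.union_subset (hsub 0) (hsub 1)) (hsub 2)) ?_
  exact Set.union_subset (Set.union_subset (pline_cardPt_subset_windRose p i)
    (pline_cardPt_subset_windRose p j)) (pline_cardPt_subset_windRose p k)

variable [DecidableEq K]

theorem nnz_mk {v : Fin 3 → K} (hv : v ≠ 0) : nnz K (mk K v hv) = hammingNorm v := by
  simp only [nnz, hammingNorm, Ne, rep_mk_eq_zero_iff]

theorem isMidland_iff {p : ℙ K (Fin 3 → K)} : IsMidland K p ↔ ∀ i, p.rep i ≠ 0 :=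
  hammingNorm_eq_card_iff

theorem isMidland_mk_iff {v : Fin 3 → K} (hv : v ≠ 0) :
    IsMidland K (mk K v hv) ↔ ∀ i, v i ≠ 0 :=
  isMidland_iff.trans <| forall_congr' fun i => (rep_mk_eq_zero_iff hv i).not

theorem IsCoast.exists_rep_eq_zero {p : ℙ K (Fin 3 → K)} (hp : IsCoast K p) :
    ∃ k, p.rep k = 0 ∧ ∀ i ≠ k, p.rep i ≠ 0 :=
  exists_eq_zero_of_hammingNorm_add_one_eq_card <| by
    show nnz K p + 1 = Fintype.card (Fin 3)
    rw [hp]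
    rfl

theorem isCardinal_cardPt (i : Fin 3) : IsCardinal K (cardPt K i) := by
  rw [IsCardinal, cardPt, nnz_mk, hammingNorm_single i one_ne_zero]

theorem IsCardinal.exists_eq_cardPt {p : ℙ K (Fin 3 → K)} (hp : IsCardinal K p) :
    ∃ i, p = cardPt K i := by
  obtain ⟨i, hi⟩ := exists_eq_single_of_hammingNorm_eq_one hp
  refine ⟨i, ?_⟩
  rw [cardPt, ← p.mk_rep, mk_eq_mk_iff']
  exact ⟨p.rep i, by rw [← Pi.single_smul', smul_eq_mul, mul_one, ← hi]⟩

theorem ne_cardPt_of_not_isCardinal {p : ℙ K (Fin 3 → K)} (hp : ¬ IsCardinal K p) (i : Fin 3) :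
    p ≠ cardPt K i := by
  rintro rfl
  exact hp (isCardinal_cardPt i)

theorem pline_cardPt_ne_of_isMidland {p : ℙ K (Fin 3 → K)} (hp : IsMidland K p) {a b : Fin 3}
    (hab : a ≠ b) : pline K p (cardPt K a) ≠ pline K p (cardPt K b) := by
  intro h
  obtain ⟨c, hca, hcb⟩ := Fin3.exists_ne_ne hab
  have hb : cardPt K b ∈ pline K (cardPt K a) p := by
    rw [pline_comm, h]
    exact right_mem_pline _ _
  have hp' : p ∈ pline K (cardPt K b) (cardPt K a) := by
    rw [pline_eq_of_mem hb (cardPt_injective.ne hab.symm)]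
    exact right_mem_pline _ _
  exact isMidland_iff.mp hp c ((mem_pline_cardPt_iff hab.symm hcb.symm hca.symm p).mp hp')

variable [Fintype K]

theorem isMidlandLine_of_mem {u v q : ℙ K (Fin 3 → K)} (huv : u ≠ v) (hq : q ∈ pline K u v)
    (hmid : IsMidland K q) : IsMidlandLine K (pline K u v) :=
  ⟨⟨u, v, huv, rfl⟩, q, hq, hmid⟩

theorem isCoastLine_pline_cardPt {i j : Fin 3} (hij : i ≠ j) :
    IsCoastLine K (pline K (cardPt K i) (cardPt K j)) := by
  obtain ⟨k, hki, hkj⟩ := Fin3.exists_ne_ne hij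
  refine ⟨⟨_, _, cardPt_injective.ne hij, rfl⟩, fun ⟨q, hq, hmid⟩ => ?_⟩
  exact isMidland_iff.mp hmid k ((mem_pline_cardPt_iff hij hki.symm hkj.symm q).mp hq)

theorem isMidlandLine_pline_cardPt_of_rep_eq_zero {p : ℙ K (Fin 3 → K)} {k : Fin 3}
    (hk : p.rep k = 0) (hnz : ∀ i ≠ k, p.rep i ≠ 0) :
    IsMidlandLine K (pline K p (cardPt K k)) := by
  have hpk : p ≠ cardPt K k := by
    rintro rfl
    exact (cardPt_rep_eq_zero_iff k k).mp hk rfl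
  have hw : p.rep + Pi.single k 1 ≠ 0 := fun h => by simpa [hk] using congrFun h k
  refine isMidlandLine_of_mem hpk (q := mk K _ hw) ?_ ?_
  · rw [pline_of_ne hpk, Set.mem_ofPred_eq, submodule_mk, submodule_eq, cardPt, submodule_mk,
      Submodule.span_singleton_le_iff_mem]
    exact Submodule.add_mem_sup (Submodule.mem_span_singleton_self _)
      (Submodule.mem_span_singleton_self _)
  · rw [isMidland_mk_iff]
    intro m
    rcases eq_or_ne m k with rfl | hmk
    · simp [hk]
    · simpa [Pi.single_eq_of_ne hmk] using hnz m hmk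

theorem exists_midlandLines_of_isMidland {p : ℙ K (Fin 3 → K)} (hp : IsMidland K p) :
    ∃ L₁ L₂ L₃, IsMidlandLine K L₁ ∧ IsMidlandLine K L₂ ∧ IsMidlandLine K L₃ ∧
      L₁ ≠ L₂ ∧ L₁ ≠ L₃ ∧ L₂ ≠ L₃ ∧ windRose K p = L₁ ∪ L₂ ∪ L₃ := by
  have hne := ne_cardPt_of_not_isCardinal (p := p) (by simp_all [IsMidland, IsCardinal])
  have hL (m : Fin 3) := isMidlandLine_of_mem (hne m) (left_mem_pline _ _) hp
  have hdist {a b : Fin 3} (hab : a ≠ b) := pline_cardPt_ne_of_isMidland hp hab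
  exact ⟨_, _, _, hL 0, hL 1, hL 2, hdist (by decide), hdist (by decide), hdist (by decide), rfl⟩

theorem exists_coastLine_midlandLine_of_isCoast {p : ℙ K (Fin 3 → K)} (hp : IsCoast K p) :
    ∃ C M, IsCoastLine K C ∧ IsMidlandLine K M ∧ windRose K p = C ∪ M := by
  obtain ⟨k, hk, hnz⟩ := hp.exists_rep_eq_zero
  obtain ⟨i, j, hij, hik, hjk⟩ := Fin3.exists_pair_ne k
  have hne := ne_cardPt_of_not_isCardinal (p := p) (by simp_all [IsCoast, IsCardinal])
  have hpC : p ∈ pline K (cardPt K i) (cardPt K j) := (mem_pline_cardPt_iff hij hik hjk p).mpr hk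
  have hCi : pline K p (cardPt K i) = pline K (cardPt K i) (cardPt K j) :=
    pline_eq_of_mem hpC (hne i)
  have hCj : pline K p (cardPt K j) = pline K (cardPt K i) (cardPt K j) := by
    rw [pline_comm (cardPt K i)] at hpC ⊢
    exact pline_eq_of_mem hpC (hne j)
  refine ⟨_, _, isCoastLine_pline_cardPt hij,
    isMidlandLine_pline_cardPt_of_rep_eq_zero hk hnz, ?_⟩
  rw [windRose_eq_union hij hik hjk, hCi, hCj, Set.union_self]

theorem exists_coastLines_of_isCardinal {p : ℙ K (Fin 3 → K)} (hp : IsCardinal K p) :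
    ∃ C₁ C₂, IsCoastLine K C₁ ∧ IsCoastLine K C₂ ∧ C₁ ≠ C₂ ∧ windRose K p = C₁ ∪ C₂ := by
  obtain ⟨i, rfl⟩ := hp.exists_eq_cardPt
  obtain ⟨j, k, hjk, hji, hki⟩ := Fin3.exists_pair_ne i
  have hC : pline K (cardPt K i) (cardPt K j) ≠ pline K (cardPt K i) (cardPt K k) := by
    intro h
    have hj : cardPt K j ∈ pline K (cardPt K i) (cardPt K k) := h ▸ right_mem_pline _ _
    exact (cardPt_rep_eq_zero_iff j j).mp
      ((mem_pline_cardPt_iff hki.symm hji.symm hjk.symm _).mp hj) rfl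
  refine ⟨_, _, isCoastLine_pline_cardPt hji.symm, isCoastLine_pline_cardPt hki.symm, hC, ?_⟩
  rw [windRose_eq_union hji.symm hki.symm hjk, pline_self, Set.singleton_union,
    Set.insert_eq_of_mem (left_mem_pline _ _)]

end WindRose

theorem stmt_15 (F : Type*) [Field F] [Fintype F] [DecidableEq F]
    (p : Projectivization F (Fin 3 → F)) :
    (IsMidland F p → ∃ L₁ L₂ L₃, IsMidlandLine F L₁ ∧ IsMidlandLine F L₂ ∧
      IsMidlandLine F L₃ ∧ L₁ ≠ L₂ ∧ L₁ ≠ L₃ ∧ L₂ ≠ L₃ ∧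
      windRose F p = L₁ ∪ L₂ ∪ L₃) ∧
    (IsCoast F p → ∃ C M, IsCoastLine F C ∧ IsMidlandLine F M ∧
      windRose F p = C ∪ M) ∧
    (IsCardinal F p → ∃ C₁ C₂, IsCoastLine F C₁ ∧ IsCoastLine F C₂ ∧ C₁ ≠ C₂ ∧
      windRose F p = C₁ ∪ C₂) :=
  ⟨exists_midlandLines_of_isMidland, exists_coastLine_midlandLine_of_isCoast,
    exists_coastLines_of_isCardinal⟩
end
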